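/- arXiv:1109.0761 — 5 statements merged into one kernel-verified Lean document; each statement's English description precedes it below -/
import Mathlib

section
/- Let π, ε, C, α be as in the existence theorem for chain diagonal approximations: C a chain complex of finitely generated free left ℤ[π]-modules with chosen bases in degrees 0 to n whose augmented complex is exact. If {Δ_i} and {Δ'_i} are two families of ℤ[π]-module maps Δ_i, Δ'_i: C_* → (C ⊗_ℤ C)_{*+i} each satisfying conditions (0)–(iv) of that theorem, then Δ₀ and Δ'₀ are chain homotopic as ℤ[π]-module chain maps: there exists a ℤ[π]-module map H: C_* → (C ⊗_ℤ C)_{*+1} with Δ₀ − Δ'₀ = ∂_⊗ H + H ∂. -/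
open scoped TensorProduct

namespace stmt1

variable {π : Type*} [Group π]

/-- The action of `g ∈ π` on a left `ℤ[π]`-module, as a `ℤ`-linear map. -/
noncomputable def actL (M : Type*) [AddCommGroup M] [Module (MonoidAlgebra ℤ π) M]
    (g : π) : M →ₗ[ℤ] M :=
  (DistribMulAction.toAddMonoidHom M
    ((MonoidAlgebra.of ℤ π g) : MonoidAlgebra ℤ π)).toIntLinearMap

/-- Restriction of scalars of a `ℤ[π]`-linear map to a `ℤ`-linear map. -/
noncomputable def zres {M N : Type*} [AddCommGroup M] [AddCommGroup N]
    [Module (MonoidAlgebra ℤ π) M] [Module (MonoidAlgebra ℤ π) N]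
    (f : M →ₗ[MonoidAlgebra ℤ π] N) : M →ₗ[ℤ] N :=
  f.toAddMonoidHom.toIntLinearMap

/-- The `ε`-transposition `T_ε : M ⊗ N → N ⊗ M`, `x ⊗ y ↦ (-1)^{pq} y ⊗ εx`,
for `x` of degree `p` and `y` of degree `q`. -/
noncomputable def Tmap (ε : ℤ) (p q : ℕ) (M N : Type*) [AddCommGroup M] [AddCommGroup N] :
    (M ⊗[ℤ] N) →ₗ[ℤ] (N ⊗[ℤ] M) :=
  ((-1 : ℤ) ^ (p * q) * ε) • (TensorProduct.comm ℤ M N).toLinearMap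

/-- The augmentation `ℤ[π] → ℤ`, `Σ a_g g ↦ Σ a_g`. -/
noncomputable def aug : MonoidAlgebra ℤ π →ₐ[ℤ] ℤ := MonoidAlgebra.lift ℤ ℤ π 1

/-- The augmentation `α : C₀ → ℤ` determined by a basis of `C₀` and a
distinguished basis element: `α((Σ a_g g)·h̃⁰) = Σ a_g` and `α = 0` on the
other basis elements. -/
noncomputable def alphaMap {C0 : Type*} [AddCommGroup C0]
    [Module (MonoidAlgebra ℤ π) C0] {ι : Type*}
    (b : Module.Basis ι (MonoidAlgebra ℤ π) C0) (i₀ : ι) : C0 →ₗ[ℤ] ℤ :=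
  (aug (π := π)).toLinearMap ∘ₗ
    zres (Finsupp.lapply i₀ ∘ₗ b.repr.toLinearMap)

/-- Conditions (0)–(iv) of Davis' theorem for a family of `ℤ`-linear,
`π`-equivariant degree-`i` maps `Δ_i : C_* → (C ⊗_ℤ C)_{*+i}`, recorded via
their components `Δ i k p q : C_k → C_p ⊗ C_q` (the component being relevant
when `p + q = k + i`, all other components vanishing). -/
def IsDiagApprox (n : ℕ) (C : ℕ → Type*) [∀ k, AddCommGroup (C k)]
    [∀ k, Module (MonoidAlgebra ℤ π) (C k)]
    (d : ∀ k, C (k + 1) →ₗ[MonoidAlgebra ℤ π] C k)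
    (alpha : C 0 →ₗ[ℤ] ℤ) (ε : ℤ)
    (Δ : ∀ i k p q : ℕ, C k →ₗ[ℤ] (C p ⊗[ℤ] C q)) : Prop :=
  -- components vanish unless p + q = k + i
  (∀ i k p q : ℕ, p + q ≠ k + i → Δ i k p q = 0) ∧
  -- Δ_i = 0 for i > n
  (∀ i, n < i → ∀ k p q : ℕ, Δ i k p q = 0) ∧
  -- each Δ_i is a ℤ[π]-module homomorphism (w.r.t. the diagonal action)
  (∀ (i k p q : ℕ) (g : π) (x : C k),
    Δ i k p q (actL (C k) g x)
      = TensorProduct.map (actL (C p) g) (actL (C q) g) (Δ i k p q x)) ∧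
  -- (0) for i = 0: Δ₀ is a chain map, ∂_⊗ Δ₀ - Δ₀ ∂ = 0
  (∀ k p q : ℕ, p + q = k →
    id (α := C (k + 1) →ₗ[ℤ] C p ⊗[ℤ] C q) (TensorProduct.map LinearMap.id (zres (d q)) ∘ₗ Δ 0 (k + 1) p (q + 1)
      + ((-1 : ℤ) ^ q) •
          (TensorProduct.map (zres (d p)) LinearMap.id ∘ₗ Δ 0 (k + 1) (p + 1) q))
      - Δ 0 k p q ∘ₗ zres (d k) = 0) ∧
  -- (0) for i ≥ 1, on C_{k+1}:
  -- ∂_⊗ Δ_i - (-1)^i Δ_i ∂ = Δ_{i-1} + (-1)^i T_ε Δ_{i-1}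
  (∀ i k p q : ℕ, p + q = k + i + 1 →
    id (α := C (k + 1) →ₗ[ℤ] C p ⊗[ℤ] C q) (TensorProduct.map LinearMap.id (zres (d q)) ∘ₗ Δ (i + 1) (k + 1) p (q + 1)
      + ((-1 : ℤ) ^ q) •
          (TensorProduct.map (zres (d p)) LinearMap.id ∘ₗ Δ (i + 1) (k + 1) (p + 1) q))
      - ((-1 : ℤ) ^ (i + 1)) • (Δ (i + 1) k p q ∘ₗ zres (d k))
    = Δ i (k + 1) p q
      + ((-1 : ℤ) ^ (i + 1)) • (Tmap ε q p (C q) (C p) ∘ₗ Δ i (k + 1) q p)) ∧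
  -- (0) for i ≥ 1, on C₀ (where ∂ = 0):
  (∀ i p q : ℕ, p + q = i →
    TensorProduct.map LinearMap.id (zres (d q)) ∘ₗ Δ (i + 1) 0 p (q + 1)
      + ((-1 : ℤ) ^ q) •
          (TensorProduct.map (zres (d p)) LinearMap.id ∘ₗ Δ (i + 1) 0 (p + 1) q)
    = Δ i 0 p q
      + ((-1 : ℤ) ^ (i + 1)) • (Tmap ε q p (C q) (C p) ∘ₗ Δ i 0 q p)) ∧
  -- (i) Δ_j(C_i) ⊆ ⊕_{m ≤ i, l ≤ i} C_m ⊗ C_l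
  (∀ i k p q : ℕ, (k < p ∨ k < q) → Δ i k p q = 0) ∧
  -- (ii) (α ⊗ 1) ∘ Δ₀ = 1
  (∀ k : ℕ,
    (TensorProduct.lid ℤ (C k)).toLinearMap ∘ₗ
        TensorProduct.map alpha LinearMap.id ∘ₗ Δ 0 k 0 k = LinearMap.id) ∧
  -- (iii) (1 ⊗ α) ∘ Δ₀ = 1
  (∀ k : ℕ,
    (TensorProduct.rid ℤ (C k)).toLinearMap ∘ₗ
        TensorProduct.map LinearMap.id alpha ∘ₗ Δ 0 k k 0 = LinearMap.id) ∧
  -- (iv) Δ_i(c) - c ⊗ c = a + (-1)^i T_ε a for some a ∈ C_i ⊗ C_i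
  (∀ (i : ℕ) (x : C i), ∃ a : C i ⊗[ℤ] C i,
    Δ i i i i x - x ⊗ₜ[ℤ] x = a + ((-1 : ℤ) ^ i) • (Tmap ε i i (C i) (C i) a))

end stmt1

/-!
`D = Δ₀ - Δ'₀` is a `π`-equivariant chain map `C → C ⊗ C`, and by condition (ii) it vanishes
after `α ⊗ α`. Each `C k` is free over `ℤ`, so the exact augmented complex `C → ℤ` has a `ℤ`-linear
contraction `s`, and `s ⊗ 1 + η ⊗ s` (with `η = e·α`, `α e = 1`) contracts `C ⊗ C` over `ℤ` away
from degree `0`. The homotopy is built degree by degree on the `ℤ[π]`-bases: for a basis element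
`b`, `D b - H (∂ b)` is a cycle of `C ⊗ C`, `H b` is its image under the contraction, and `H` is
extended equivariantly.
-/

open TensorProduct LinearMap

namespace stmt1

-- `P ⊗[ℤ] Q` is also a `ℤ`-module as an additive group; the two structures are not reducibly
-- defeq, and the lemmas about `TensorProduct.map` are stated for the tensor product's own.
attribute [local instance high] TensorProduct.instModule

variable {π : Type*} [Group π]

section Equivariance

variable {M N P Q : Type*} [AddCommGroup M] [AddCommGroup N] [AddCommGroup P] [AddCommGroup Q]
  [Module (MonoidAlgebra ℤ π) M] [Module (MonoidAlgebra ℤ π) N]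
  [Module (MonoidAlgebra ℤ π) P] [Module (MonoidAlgebra ℤ π) Q]

@[simp] lemma zres_apply (f : M →ₗ[MonoidAlgebra ℤ π] N) (x : M) : zres f x = f x := rfl

lemma actL_apply (g : π) (x : M) : actL M g x = MonoidAlgebra.of ℤ π g • x := rfl

lemma actL_mul (g h : π) : actL M (g * h) = actL M g ∘ₗ actL M h := by
  ext x
  simp only [comp_apply, actL_apply, ← mul_smul, map_mul]

lemma actL_one : actL M (1 : π) = LinearMap.id := by
  ext x
  simp only [actL_apply, map_one, one_smul, id_apply]

lemma zres_comp_actL (f : M →ₗ[MonoidAlgebra ℤ π] N) (g : π) :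
    zres f ∘ₗ actL M g = actL N g ∘ₗ zres f :=
  LinearMap.ext fun x => f.map_smul _ x

variable (π) in
def IsDiagEquivariant (F : M →ₗ[ℤ] P ⊗[ℤ] Q) : Prop :=
  ∀ (g : π) (x : M), F (actL M g x) = map (actL P g) (actL Q g) (F x)

namespace IsDiagEquivariant

lemma zero : IsDiagEquivariant π (0 : M →ₗ[ℤ] P ⊗[ℤ] Q) := fun _ _ => by simp

variable {F G : M →ₗ[ℤ] P ⊗[ℤ] Q}

lemma add (hF : IsDiagEquivariant π F) (hG : IsDiagEquivariant π G) :
    IsDiagEquivariant π (F + G) := fun g x => by simp [hF g x, hG g x]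

lemma sub (hF : IsDiagEquivariant π F) (hG : IsDiagEquivariant π G) :
    IsDiagEquivariant π (F - G) := fun g x => by simp [hF g x, hG g x]

lemma smul (hF : IsDiagEquivariant π F) (c : ℤ) : IsDiagEquivariant π (c • F) :=
  fun g x => by simp [hF g x]

lemma comp_zres (hF : IsDiagEquivariant π F) (f : N →ₗ[MonoidAlgebra ℤ π] M) :
    IsDiagEquivariant π (F ∘ₗ zres f) := fun g x => by
  simp only [comp_apply, ← hF g, ← LinearMap.comp_apply (zres f), zres_comp_actL]

lemma map_id_zres {Q' : Type*} [AddCommGroup Q'] [Module (MonoidAlgebra ℤ π) Q']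
    (hF : IsDiagEquivariant π F) (f : Q →ₗ[MonoidAlgebra ℤ π] Q') :
    IsDiagEquivariant π (map LinearMap.id (zres f) ∘ₗ F) := fun g x => by
  rw [comp_apply, comp_apply, hF g, ← comp_apply (map _ _), ← comp_apply (map _ _), ← map_comp,
    ← map_comp, zres_comp_actL, id_comp, comp_id]

lemma map_zres_id {P' : Type*} [AddCommGroup P'] [Module (MonoidAlgebra ℤ π) P']
    (hF : IsDiagEquivariant π F) (f : P →ₗ[MonoidAlgebra ℤ π] P') :
    IsDiagEquivariant π (map (zres f) LinearMap.id ∘ₗ F) := fun g x => by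
  rw [comp_apply, comp_apply, hF g, ← comp_apply (map _ _), ← comp_apply (map _ _), ← map_comp,
    ← map_comp, zres_comp_actL, id_comp, comp_id]

lemma span_actL_basis {ι : Type*} (b : Module.Basis ι (MonoidAlgebra ℤ π) M) :
    Submodule.span ℤ (Set.range fun gj : π × ι => actL M gj.1 (b gj.2)) = ⊤ := by
  refine Submodule.eq_top_iff'.mpr fun x => ?_
  rw [← b.linearCombination_repr x, Finsupp.linearCombination_apply]
  refine Submodule.sum_mem _ fun j _ => ?_
  change b.repr x j • b j ∈ _
  induction b.repr x j using MonoidAlgebra.induction_on with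
  | of g => exact Submodule.subset_span ⟨(g, j), rfl⟩
  | add r r' hr hr' => rw [add_smul]; exact Submodule.add_mem _ hr hr'
  | smul n r hr => rw [smul_assoc]; exact Submodule.smul_mem _ _ hr

lemma ext_basis {ι : Type*} (b : Module.Basis ι (MonoidAlgebra ℤ π) M)
    (hF : IsDiagEquivariant π F) (hG : IsDiagEquivariant π G) (h : ∀ j, F (b j) = G (b j)) :
    F = G := by
  refine LinearMap.ext_on (span_actL_basis b) ?_
  rintro _ ⟨⟨g, j⟩, rfl⟩
  simp only [hF g, hG g, h]

end IsDiagEquivariant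

variable (P Q) in
noncomputable def diagAct : MonoidAlgebra ℤ π →ₐ[ℤ] Module.End ℤ (P ⊗[ℤ] Q) :=
  MonoidAlgebra.lift ℤ (Module.End ℤ (P ⊗[ℤ] Q)) π
    { toFun := fun g => map (actL P g) (actL Q g)
      map_one' := by rw [actL_one, actL_one, map_id]; rfl
      map_mul' := fun g h => by rw [actL_mul, actL_mul, map_comp]; rfl }

lemma diagAct_of (g : π) :
    diagAct P Q (MonoidAlgebra.of ℤ π g) = map (actL P g) (actL Q g) :=
  MonoidAlgebra.lift_of _ _

noncomputable def diagExtend {ι : Type*} (b : Module.Basis ι (MonoidAlgebra ℤ π) M)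
    (w : ι → P ⊗[ℤ] Q) : M →ₗ[ℤ] P ⊗[ℤ] Q :=
  Finsupp.lsum ℤ (fun j => (diagAct P Q).toLinearMap.flip (w j)) ∘ₗ zres b.repr.toLinearMap

variable {ι : Type*} (b : Module.Basis ι (MonoidAlgebra ℤ π) M) (w : ι → P ⊗[ℤ] Q)

@[simp] lemma diagExtend_basis (j : ι) : diagExtend b w (b j) = w j := by
  simp [diagExtend]

lemma diagExtend_smul (r : MonoidAlgebra ℤ π) (x : M) :
    diagExtend b w (r • x) = diagAct P Q r (diagExtend b w x) := by
  simp only [diagExtend, comp_apply, zres_apply, LinearEquiv.coe_coe, map_smul]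
  induction b.repr x using Finsupp.induction with
  | zero => simp
  | single_add j m f _ _ ih =>
    rw [smul_add, map_add, map_add, map_add, ih, Finsupp.smul_single, Finsupp.lsum_single,
      Finsupp.lsum_single]
    simp [smul_eq_mul, map_mul]

lemma isDiagEquivariant_diagExtend : IsDiagEquivariant π (diagExtend b w) := fun g x => by
  rw [actL_apply, diagExtend_smul, diagAct_of]

end Equivariance

section Contraction

variable {R : Type*} [Ring R]

lemma exists_comp_eq_of_range_le {M N P : Type*} [AddCommGroup M] [AddCommGroup N]
    [AddCommGroup P] [Module R M] [Module R N] [Module R P] [Module.Projective R P]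
    (f : M →ₗ[R] N) (g : P →ₗ[R] N) (h : range g ≤ range f) : ∃ l : P →ₗ[R] M, f ∘ₗ l = g := by
  obtain ⟨l, hl⟩ := Module.projective_lifting_property f.rangeRestrict
    (g.codRestrict (range f) fun x => h ⟨x, rfl⟩) f.surjective_rangeRestrict
  exact ⟨l, LinearMap.ext fun x => congr_arg Subtype.val (LinearMap.congr_fun hl x)⟩

variable {C : ℕ → Type*} [∀ k, AddCommGroup (C k)] [∀ k, Module R (C k)]

/-- `η` stands for `C 0 → ℤ → C 0`, the augmentation followed by a section of it. -/
structure IsContraction (δ : ∀ k, C (k + 1) →ₗ[R] C k) (η : C 0 →ₗ[R] C 0)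
    (s : ∀ k, C k →ₗ[R] C (k + 1)) : Prop where
  zero : δ 0 ∘ₗ s 0 + η = LinearMap.id
  succ : ∀ k, δ (k + 1) ∘ₗ s (k + 1) + s k ∘ₗ δ k = LinearMap.id

theorem exists_isContraction [∀ k, Module.Projective R (C k)] (δ : ∀ k, C (k + 1) →ₗ[R] C k)
    (η : C 0 →ₗ[R] C 0) (hδδ : ∀ k, δ k ∘ₗ δ (k + 1) = 0) (hηδ : η ∘ₗ δ 0 = 0)
    (hexact₀ : range (LinearMap.id - η) ≤ range (δ 0))
    (hexact : ∀ k, ker (δ k) ≤ range (δ (k + 1))) :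
    ∃ s, IsContraction δ η s := by
  obtain ⟨s₀, hs₀⟩ := exists_comp_eq_of_range_le (δ 0) _ hexact₀
  have step : ∀ k (t : C k →ₗ[R] C (k + 1)), δ k ∘ₗ t ∘ₗ δ k = δ k →
      ∃ t' : C (k + 1) →ₗ[R] C (k + 2), δ (k + 1) ∘ₗ t' = LinearMap.id - t ∘ₗ δ k := by
    refine fun k t ht => exists_comp_eq_of_range_le _ _ (le_trans ?_ (hexact k))
    rintro _ ⟨y, rfl⟩
    rw [mem_ker, ← comp_apply, comp_sub, comp_id, ht, sub_self, LinearMap.zero_apply]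
  choose next hnext using step
  -- the recursion carries `∂ s ∂ = ∂`, which is what makes the next lift possible
  let seq : ∀ k, {t : C k →ₗ[R] C (k + 1) // δ k ∘ₗ t ∘ₗ δ k = δ k} := fun k =>
    Nat.rec ⟨s₀, by rw [← comp_assoc, hs₀, sub_comp, hηδ, id_comp, sub_zero]⟩
      (fun k t => ⟨next k t.1 t.2, by
        rw [← comp_assoc, hnext, sub_comp, comp_assoc, hδδ, comp_zero, id_comp, sub_zero]⟩) k
  refine ⟨fun k => (seq k).1, ?_, fun k => ?_⟩
  · change δ 0 ∘ₗ s₀ + η = LinearMap.id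
    rw [hs₀, sub_add_cancel]
  · change δ (k + 1) ∘ₗ next k (seq k).1 (seq k).2 + (seq k).1 ∘ₗ δ k = LinearMap.id
    rw [hnext, sub_add_cancel]

end Contraction

section TensorComplex

variable {C : ℕ → Type*} [∀ k, AddCommGroup (C k)] (δ : ∀ k, C (k + 1) →ₗ[ℤ] C k)
  {M : Type*} [AddCommGroup M]

/-- The differential `x ⊗ y ↦ x ⊗ ∂y + (-1)^q ∂x ⊗ y` of `C ⊗ C`, acting on a family of
components `f p q ∈ C p ⊗ C q`. -/
def tensorDiff (f : ∀ p q, C p ⊗[ℤ] C q) (p q : ℕ) : C p ⊗[ℤ] C q :=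
  map LinearMap.id (δ q) (f p (q + 1)) + ((-1 : ℤ) ^ q) • map (δ p) LinearMap.id (f (p + 1) q)

def tensorDiffMap (F : ∀ p q, M →ₗ[ℤ] C p ⊗[ℤ] C q) (p q : ℕ) :
    M →ₗ[ℤ] C p ⊗[ℤ] C q :=
  map LinearMap.id (δ q) ∘ₗ F p (q + 1) + ((-1 : ℤ) ^ q) • (map (δ p) LinearMap.id ∘ₗ F (p + 1) q)

@[simp] lemma tensorDiffMap_apply (F : ∀ p q, M →ₗ[ℤ] C p ⊗[ℤ] C q) (p q : ℕ) (x : M) :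
    tensorDiffMap δ F p q x = tensorDiff δ (fun p q => F p q x) p q := rfl

lemma tensorDiffMap_zero_zero (F : ∀ p q, M →ₗ[ℤ] C p ⊗[ℤ] C q) :
    tensorDiffMap δ F 0 0
      = map LinearMap.id (δ 0) ∘ₗ F 0 1 + map (δ 0) LinearMap.id ∘ₗ F 1 0 := by
  rw [tensorDiffMap, pow_zero, one_smul]

lemma tensorDiffMap_sub (F G : ∀ p q, M →ₗ[ℤ] C p ⊗[ℤ] C q)
    (p q : ℕ) :
    tensorDiffMap δ (fun p q => F p q - G p q) p q
      = tensorDiffMap δ F p q - tensorDiffMap δ G p q := by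
  simp only [tensorDiffMap, comp_sub, smul_sub]
  abel

lemma tensorDiff_sub (f g : ∀ p q, C p ⊗[ℤ] C q) (p q : ℕ) :
    tensorDiff δ (fun p q => f p q - g p q) p q = tensorDiff δ f p q - tensorDiff δ g p q := by
  simp only [tensorDiff, map_sub, smul_sub]
  abel

variable (η : C 0 →ₗ[ℤ] C 0) (s : ∀ k, C k →ₗ[ℤ] C (k + 1))

/-- The contraction `s ⊗ 1 + η ⊗ s` of `C ⊗ C` (with Koszul signs) induced by a contraction `s`
of `C`. -/
def tensorContr (f : ∀ p q, C p ⊗[ℤ] C q) : ∀ p q, C p ⊗[ℤ] C q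
  | 0, 0 => 0
  | 0, q + 1 => map η (s q) (f 0 q)
  | p + 1, q => ((-1 : ℤ) ^ q) • map (s p) LinearMap.id (f p q)

lemma tensorContr_zero : tensorContr η s 0 = 0 := by
  funext p q
  match p, q with
  | 0, 0 => rfl
  | 0, q + 1 => simp [tensorContr]
  | p + 1, q => simp [tensorContr]

lemma tensorContr_eq_zero {f : ∀ p q, C p ⊗[ℤ] C q} {m : ℕ} (hf : ∀ p q, p + q ≠ m → f p q = 0)
    {p q : ℕ} (hpq : p + q ≠ m + 1) : tensorContr η s f p q = 0 := by
  match p, q with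
  | 0, 0 => rfl
  | 0, q + 1 => simp [tensorContr, hf 0 q (by omega)]
  | p + 1, q => simp [tensorContr, hf p q (by omega)]

lemma neg_one_pow_smul_smul {A : Type*} [AddCommGroup A] (q : ℕ) (t : A) :
    ((-1 : ℤ) ^ q) • ((-1 : ℤ) ^ q) • t = t := by
  rw [smul_smul, ← mul_pow, neg_mul_neg, one_mul, one_pow, one_smul]

lemma neg_one_pow_succ_smul {A : Type*} [AddCommGroup A] (q : ℕ) (t : A) :
    ((-1 : ℤ) ^ (q + 1)) • t = -(((-1 : ℤ) ^ q) • t) := by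
  rw [pow_succ, mul_neg_one, neg_smul]

variable {δ η s}

lemma tensorDiff_tensorContr_add_succ (hs : IsContraction δ η s) (f : ∀ p q, C p ⊗[ℤ] C q)
    (p q : ℕ) :
    tensorDiff δ (tensorContr η s f) (p + 1) q + tensorContr η s (tensorDiff δ f) (p + 1) q
      = f (p + 1) q := by
  have key : map (δ (p + 1) ∘ₗ s (p + 1)) LinearMap.id (f (p + 1) q)
      + map (s p ∘ₗ δ p) LinearMap.id (f (p + 1) q) = f (p + 1) q := by
    rw [← LinearMap.add_apply, ← map_add_left, hs.succ, map_id, id_apply]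
  simp only [tensorDiff, tensorContr, map_add, LinearMap.map_smul, smul_add, map_map, comp_id,
    id_comp]
  rw [neg_one_pow_succ_smul, neg_one_pow_smul_smul, neg_one_pow_smul_smul]
  conv_rhs => rw [← key]
  abel

lemma tensorDiff_tensorContr_add_zero_succ (hs : IsContraction δ η s) (hηδ : η ∘ₗ δ 0 = 0)
    (f : ∀ p q, C p ⊗[ℤ] C q) (q : ℕ) :
    tensorDiff δ (tensorContr η s f) 0 (q + 1) + tensorContr η s (tensorDiff δ f) 0 (q + 1)
      = f 0 (q + 1) := by
  have key : map η (δ (q + 1) ∘ₗ s (q + 1)) (f 0 (q + 1)) + map η (s q ∘ₗ δ q) (f 0 (q + 1))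
      = map η LinearMap.id (f 0 (q + 1)) := by
    rw [← LinearMap.add_apply, ← map_add_right, hs.succ]
  have key₀ : map (δ 0 ∘ₗ s 0) LinearMap.id (f 0 (q + 1)) + map η LinearMap.id (f 0 (q + 1))
      = f 0 (q + 1) := by
    rw [← LinearMap.add_apply, ← map_add_left, hs.zero, map_id, id_apply]
  simp only [tensorDiff, tensorContr, map_add, LinearMap.map_smul, map_map, comp_id,
    id_comp, neg_one_pow_smul_smul, hηδ, map_zero_left, LinearMap.zero_apply, smul_zero,
    add_zero]
  conv_rhs => rw [← key₀, ← key]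
  abel

theorem tensorDiff_tensorContr_of_cycle (hs : IsContraction δ η s) (hηδ : η ∘ₗ δ 0 = 0)
    {f : ∀ p q, C p ⊗[ℤ] C q} (hf : tensorDiff δ f = 0) {p q : ℕ} (hpq : p + q ≠ 0) :
    tensorDiff δ (tensorContr η s f) p q = f p q := by
  match p, q with
  | 0, 0 => omega
  | 0, q + 1 =>
    simpa [hf, tensorContr_zero] using tensorDiff_tensorContr_add_zero_succ hs hηδ f q
  | p + 1, q => simpa [hf, tensorContr_zero] using tensorDiff_tensorContr_add_succ hs f p q

lemma tensorDiff_tensorContr_zero_zero (hs : IsContraction δ η s) (f : ∀ p q, C p ⊗[ℤ] C q) :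
    tensorDiff δ (tensorContr η s f) 0 0 = f 0 0 - map η η (f 0 0) := by
  have hds : δ 0 ∘ₗ s 0 = LinearMap.id - η := eq_sub_of_add_eq hs.zero
  have h₁ : map η (δ 0 ∘ₗ s 0) = map η (LinearMap.id (M := C 0)) - map η η := by
    rw [hds]; ext x y; simp [tmul_sub]
  have h₂ : map (δ 0 ∘ₗ s 0) (LinearMap.id (M := C 0))
      = LinearMap.id - map η (LinearMap.id (M := C 0)) := by
    rw [hds]; ext x y; simp [sub_tmul]
  simp only [tensorDiff, tensorContr, map_map, comp_id, id_comp, pow_zero, one_smul, h₁, h₂,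
    LinearMap.sub_apply, id_apply]
  abel

end TensorComplex

section Homotopy

variable {C : ℕ → Type*} [∀ k, AddCommGroup (C k)] [∀ k, Module (MonoidAlgebra ℤ π) (C k)]
  (d : ∀ k, C (k + 1) →ₗ[MonoidAlgebra ℤ π] C k)

lemma isDiagEquivariant_tensorDiffMap {M : Type*} [AddCommGroup M] [Module (MonoidAlgebra ℤ π) M]
    {F : ∀ p q, M →ₗ[ℤ] C p ⊗[ℤ] C q} (hF : ∀ p q, IsDiagEquivariant π (F p q)) (p q : ℕ) :
    IsDiagEquivariant π (tensorDiffMap (fun k => zres (d k)) F p q) :=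
  ((hF p (q + 1)).map_id_zres (d q)).add (((hF (p + 1) q).map_zres_id (d p)).smul _)

structure IsEquivariantChainMap (D : ∀ k p q, C k →ₗ[ℤ] C p ⊗[ℤ] C q) : Prop where
  eq_zero : ∀ k p q, p + q ≠ k → D k p q = 0
  equivariant : ∀ k p q, IsDiagEquivariant π (D k p q)
  comm_d : ∀ k p q, p + q = k →
    tensorDiffMap (fun k => zres (d k)) (D (k + 1)) p q = D k p q ∘ₗ zres (d k)

variable {d} in
lemma IsEquivariantChainMap.sub {D D' : ∀ k p q, C k →ₗ[ℤ] C p ⊗[ℤ] C q}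
    (hD : IsEquivariantChainMap d D) (hD' : IsEquivariantChainMap d D') :
    IsEquivariantChainMap d fun k p q => D k p q - D' k p q where
  eq_zero k p q hpq := by rw [hD.eq_zero k p q hpq, hD'.eq_zero k p q hpq, sub_zero]
  equivariant k p q := (hD.equivariant k p q).sub (hD'.equivariant k p q)
  comm_d k p q hpq := by
    rw [tensorDiffMap_sub, hD.comm_d k p q hpq, hD'.comm_d k p q hpq, sub_comp]

variable {ι : ℕ → Type*} (bC : ∀ k, Module.Basis (ι k) (MonoidAlgebra ℤ π) (C k))
  (η : C 0 →ₗ[ℤ] C 0) (s : ∀ k, C k →ₗ[ℤ] C (k + 1)) (D : ∀ k p q, C k →ₗ[ℤ] C p ⊗[ℤ] C q)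

/-- On a basis element `b` of `C (k + 1)` the homotopy is the contraction of the cycle
`D b - H (∂ b)` of `C ⊗ C`. -/
noncomputable def homotopy : ∀ k p q, C k →ₗ[ℤ] C p ⊗[ℤ] C q
  | 0, p, q => diagExtend (bC 0) fun j => tensorContr η s (fun p q => D 0 p q (bC 0 j)) p q
  | k + 1, p, q => diagExtend (bC (k + 1)) fun j =>
      tensorContr η s
        (fun p q => D (k + 1) p q (bC (k + 1) j) - homotopy k p q (d k (bC (k + 1) j))) p q

lemma homotopy_zero_basis (p q : ℕ) (j : ι 0) :
    homotopy d bC η s D 0 p q (bC 0 j) = tensorContr η s (fun p q => D 0 p q (bC 0 j)) p q :=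
  diagExtend_basis _ _ _

lemma homotopy_succ_basis (k p q : ℕ) (j : ι (k + 1)) :
    homotopy d bC η s D (k + 1) p q (bC (k + 1) j)
      = tensorContr η s (fun p q =>
          D (k + 1) p q (bC (k + 1) j) - homotopy d bC η s D k p q (d k (bC (k + 1) j))) p q :=
  diagExtend_basis _ _ _

lemma isDiagEquivariant_homotopy (k p q : ℕ) :
    IsDiagEquivariant π (homotopy d bC η s D k p q) := by
  cases k <;> exact isDiagEquivariant_diagExtend _ _

variable {D}

lemma homotopy_eq_zero (hD : ∀ k p q, p + q ≠ k → D k p q = 0) :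
    ∀ k p q, p + q ≠ k + 1 → homotopy d bC η s D k p q = 0
  | 0, p, q, hpq =>
    IsDiagEquivariant.ext_basis (bC 0) (isDiagEquivariant_homotopy d bC η s D 0 p q) .zero
      fun j => by
      rw [homotopy_zero_basis, LinearMap.zero_apply]
      exact tensorContr_eq_zero η s (fun p q h => by rw [hD 0 p q h, LinearMap.zero_apply]) hpq
  | k + 1, p, q, hpq =>
    IsDiagEquivariant.ext_basis (bC (k + 1)) (isDiagEquivariant_homotopy d bC η s D _ p q)
      .zero fun j => by
      rw [homotopy_succ_basis, LinearMap.zero_apply]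
      refine tensorContr_eq_zero η s (fun p q h => ?_) hpq
      rw [hD _ p q h, homotopy_eq_zero hD k p q h, LinearMap.zero_apply, LinearMap.zero_apply,
        sub_zero]

variable {d bC η s}

lemma homotopy_spec_zero (hD : IsEquivariantChainMap d D)
    (hs : IsContraction (fun k => zres (d k)) η s) (hD₀ : ∀ x, map η η (D 0 0 0 x) = 0) :
    D 0 0 0 = tensorDiffMap (fun k => zres (d k)) (homotopy d bC η s D 0) 0 0 := by
  refine IsDiagEquivariant.ext_basis (bC 0) (hD.equivariant 0 0 0)
    (isDiagEquivariant_tensorDiffMap d (isDiagEquivariant_homotopy d bC η s D 0) 0 0) fun j => ?_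
  simp only [tensorDiffMap_apply, homotopy_zero_basis]
  rw [tensorDiff_tensorContr_zero_zero hs, hD₀, sub_zero]

lemma tensorDiff_sub_homotopy_eq_zero (hD : IsEquivariantChainMap d D) (k : ℕ)
    (hk : ∀ p q, p + q = k → tensorDiffMap (fun k => zres (d k)) (homotopy d bC η s D k) p q
      ∘ₗ zres (d k) = D k p q ∘ₗ zres (d k)) (x : C (k + 1)) :
    tensorDiff (fun k => zres (d k))
      (fun p q => D (k + 1) p q x - homotopy d bC η s D k p q (d k x)) = 0 := by
  funext p q
  by_cases hpq : p + q = k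
  · have h₁ := LinearMap.congr_fun (hD.comm_d k p q hpq) x
    have h₂ := LinearMap.congr_fun (hk p q hpq) x
    simp only [tensorDiffMap_apply, comp_apply, zres_apply] at h₁ h₂
    rw [tensorDiff_sub, h₁, h₂, sub_self]
    rfl
  · have hH := homotopy_eq_zero d bC η s hD.eq_zero k
    simp only [tensorDiff, hD.eq_zero (k + 1) p (q + 1) (by omega),
      hD.eq_zero (k + 1) (p + 1) q (by omega), hH p (q + 1) (by omega),
      hH (p + 1) q (by omega), LinearMap.zero_apply, sub_zero, map_zero, smul_zero, add_zero]
    rfl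

lemma homotopy_spec_succ (hD : IsEquivariantChainMap d D)
    (hs : IsContraction (fun k => zres (d k)) η s) (hηδ : η ∘ₗ zres (d 0) = 0) (k : ℕ)
    (hk : ∀ p q, p + q = k → tensorDiffMap (fun k => zres (d k)) (homotopy d bC η s D k) p q
      ∘ₗ zres (d k) = D k p q ∘ₗ zres (d k))
    {p q : ℕ} (hpq : p + q = k + 1) :
    D (k + 1) p q = tensorDiffMap (fun k => zres (d k)) (homotopy d bC η s D (k + 1)) p q
      + homotopy d bC η s D k p q ∘ₗ zres (d k) := by
  refine IsDiagEquivariant.ext_basis (bC (k + 1)) (hD.equivariant _ p q)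
    ((isDiagEquivariant_tensorDiffMap d (isDiagEquivariant_homotopy d bC η s D _) p q).add
      ((isDiagEquivariant_homotopy d bC η s D k p q).comp_zres (d k))) fun j => ?_
  simp only [LinearMap.add_apply, tensorDiffMap_apply, homotopy_succ_basis]
  rw [tensorDiff_tensorContr_of_cycle hs hηδ (tensorDiff_sub_homotopy_eq_zero hD k hk _)
    (by omega), comp_apply, zres_apply, sub_add_cancel]

lemma tensorDiffMap_homotopy_comp_zres (hD : IsEquivariantChainMap d D)
    (hs : IsContraction (fun k => zres (d k)) η s) (hηδ : η ∘ₗ zres (d 0) = 0)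
    (hD₀ : ∀ x, map η η (D 0 0 0 x) = 0) (hdd : ∀ k (x : C (k + 2)), d k (d (k + 1) x) = 0) :
    ∀ k p q, p + q = k → tensorDiffMap (fun k => zres (d k)) (homotopy d bC η s D k) p q
      ∘ₗ zres (d k) = D k p q ∘ₗ zres (d k)
  | 0, p, q, hpq => by
    obtain ⟨rfl, rfl⟩ : p = 0 ∧ q = 0 := by omega
    rw [← homotopy_spec_zero hD hs hD₀]
  | k + 1, p, q, hpq => by
    have hd : zres (d k) ∘ₗ zres (d (k + 1)) = 0 := LinearMap.ext (hdd k)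
    rw [homotopy_spec_succ hD hs hηδ k (tensorDiffMap_homotopy_comp_zres hD hs hηδ hD₀ hdd k) hpq,
      add_comp, comp_assoc, hd, comp_zero, add_zero]

theorem homotopy_spec (hD : IsEquivariantChainMap d D)
    (hs : IsContraction (fun k => zres (d k)) η s) (hηδ : η ∘ₗ zres (d 0) = 0)
    (hD₀ : ∀ x, map η η (D 0 0 0 x) = 0) (hdd : ∀ k (x : C (k + 2)), d k (d (k + 1) x) = 0)
    (k : ℕ) {p q : ℕ} (hpq : p + q = k + 1) :
    D (k + 1) p q = tensorDiffMap (fun k => zres (d k)) (homotopy d bC η s D (k + 1)) p q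
      + homotopy d bC η s D k p q ∘ₗ zres (d k) :=
  homotopy_spec_succ hD hs hηδ k (tensorDiffMap_homotopy_comp_zres hD hs hηδ hD₀ hdd k) hpq

end Homotopy

section DiagonalApproximation

variable {C : ℕ → Type*} [∀ k, AddCommGroup (C k)]
  [∀ k, Module (MonoidAlgebra ℤ π) (C k)] {d : ∀ k, C (k + 1) →ₗ[MonoidAlgebra ℤ π] C k}

lemma map_smulRight_smulRight {M : Type*} [AddCommGroup M] (α : M →ₗ[ℤ] ℤ) (e : M)
    (t : M ⊗[ℤ] M) :
    map (α.smulRight e) (α.smulRight e) t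
      = α (TensorProduct.lid ℤ M (map α LinearMap.id t)) • (e ⊗ₜ e) := by
  induction t using TensorProduct.induction_on with
  | zero => simp
  | tmul x y => simp [smul_tmul', smul_smul, mul_comm]
  | add u v hu hv => simp only [map_add, hu, hv, add_smul]

namespace IsDiagApprox

variable {n : ℕ} {alpha : C 0 →ₗ[ℤ] ℤ} {ε : ℤ} {Δ : ℕ → ∀ k p q, C k →ₗ[ℤ] C p ⊗[ℤ] C q}

lemma isEquivariantChainMap (h : IsDiagApprox n C d alpha ε Δ) :
    IsEquivariantChainMap d (Δ 0) where
  eq_zero k p q hpq := h.1 0 k p q hpq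
  equivariant k p q := h.2.2.1 0 k p q
  comm_d k p q hpq := sub_eq_zero.mp (h.2.2.2.1 k p q hpq)

lemma map_smulRight_apply (h : IsDiagApprox n C d alpha ε Δ) (e x : C 0) :
    map (alpha.smulRight e) (alpha.smulRight e) (Δ 0 0 0 0 x) = alpha x • (e ⊗ₜ e) := by
  rw [map_smulRight_smulRight]
  exact congr_arg (alpha · • (e ⊗ₜ e)) (LinearMap.congr_fun (h.2.2.2.2.2.2.2.1 0) x)

lemma map_smulRight_sub_eq_zero {Δ' : ℕ → ∀ k p q, C k →ₗ[ℤ] C p ⊗[ℤ] C q}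
    (h : IsDiagApprox n C d alpha ε Δ) (h' : IsDiagApprox n C d alpha ε Δ') (e x : C 0) :
    map (alpha.smulRight e) (alpha.smulRight e) (Δ 0 0 0 0 x - Δ' 0 0 0 0 x) = 0 := by
  rw [map_sub, h.map_smulRight_apply, h'.map_smulRight_apply, sub_self]

end IsDiagApprox

theorem exists_isContraction_of_basis {ι : ℕ → Type*}
    (bC : ∀ k, Module.Basis (ι k) (MonoidAlgebra ℤ π) (C k))
    (hdd : ∀ k (x : C (k + 2)), d k (d (k + 1) x) = 0) (α : C 0 →ₗ[ℤ] ℤ) {e : C 0} (he : α e = 1)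
    (haugd : ∀ x, α (d 0 x) = 0) (hexact₀ : ∀ x, α x = 0 → ∃ y, d 0 y = x)
    (hexact : ∀ k (x : C (k + 1)), d k x = 0 → ∃ y, d (k + 1) y = x) :
    ∃ s, IsContraction (fun k => zres (d k)) (α.smulRight e) s := by
  have : ∀ k, Module.Projective ℤ (C k) := fun k =>
    .of_basis ((MonoidAlgebra.basis π ℤ).smulTower (bC k))
  refine exists_isContraction _ _ (fun k => LinearMap.ext (hdd k)) (LinearMap.ext fun x => ?_)
    ?_ fun k x hx => hexact k x hx
  · simp [haugd]
  · rintro _ ⟨x, rfl⟩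
    exact hexact₀ _ (by simp [he])

end DiagonalApproximation

end stmt1

theorem stmt_1_general (π : Type*) [Group π] (ε : ℤ) (n : ℕ)
    (C : ℕ → Type*) [∀ k, AddCommGroup (C k)]
    [∀ k, Module (MonoidAlgebra ℤ π) (C k)]
    (ι : ℕ → Type*)
    (bC : ∀ k, Module.Basis (ι k) (MonoidAlgebra ℤ π) (C k))
    (d : ∀ k, C (k + 1) →ₗ[MonoidAlgebra ℤ π] C k)
    (hdd : ∀ k (x : C (k + 2)), d k (d (k + 1) x) = 0)
    (i₀ : ι 0)
    (haugd : ∀ x : C 1, stmt1.alphaMap (bC 0) i₀ (d 0 x) = 0)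
    (hsurj : Function.Surjective (stmt1.alphaMap (bC 0) i₀))
    (hexact0 : ∀ x : C 0, stmt1.alphaMap (bC 0) i₀ x = 0 → ∃ y, d 0 y = x)
    (hexact : ∀ k (x : C (k + 1)), d k x = 0 → ∃ y, d (k + 1) y = x)
    (Δ Δ' : ∀ i k p q : ℕ, C k →ₗ[ℤ] (C p ⊗[ℤ] C q))
    (hΔ : stmt1.IsDiagApprox n C d (stmt1.alphaMap (bC 0) i₀) ε Δ)
    (hΔ' : stmt1.IsDiagApprox n C d (stmt1.alphaMap (bC 0) i₀) ε Δ') :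
    ∃ H : ∀ k p q : ℕ, C k →ₗ[ℤ] (C p ⊗[ℤ] C q),
      -- H is a degree-1 family: components vanish unless p + q = k + 1
      (∀ k p q : ℕ, p + q ≠ k + 1 → H k p q = 0) ∧
      -- H is a ℤ[π]-module map for the diagonal action
      (∀ (k p q : ℕ) (g : π) (x : C k),
        H k p q (stmt1.actL (C k) g x)
          = TensorProduct.map (stmt1.actL (C p) g) (stmt1.actL (C q) g)
              (H k p q x)) ∧
      -- Δ₀ - Δ'₀ = ∂_⊗ H + H ∂, on C_{k+1} …
      (∀ k p q : ℕ, p + q = k + 1 →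
        Δ 0 (k + 1) p q - Δ' 0 (k + 1) p q
          = id (α := C (k + 1) →ₗ[ℤ] C p ⊗[ℤ] C q) (TensorProduct.map LinearMap.id (stmt1.zres (d q)) ∘ₗ H (k + 1) p (q + 1)
            + ((-1 : ℤ) ^ q) •
                (TensorProduct.map (stmt1.zres (d p)) LinearMap.id ∘ₗ
                  H (k + 1) (p + 1) q))
            + H k p q ∘ₗ stmt1.zres (d k)) ∧
      -- … and on C₀ (where ∂ = 0)
      (Δ 0 0 0 0 - Δ' 0 0 0 0
        = TensorProduct.map LinearMap.id (stmt1.zres (d 0)) ∘ₗ H 0 0 1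
          + TensorProduct.map (stmt1.zres (d 0)) LinearMap.id ∘ₗ H 0 1 0) := by
  obtain ⟨e, he⟩ := hsurj 1
  set α := stmt1.alphaMap (bC 0) i₀
  obtain ⟨s, hs⟩ := stmt1.exists_isContraction_of_basis bC hdd α he haugd hexact0 hexact
  have hηδ : α.smulRight e ∘ₗ stmt1.zres (d 0) = 0 := LinearMap.ext fun x => by simp [haugd]
  have hD := hΔ.isEquivariantChainMap.sub hΔ'.isEquivariantChainMap
  have hD₀ := hΔ.map_smulRight_sub_eq_zero hΔ' e
  refine ⟨stmt1.homotopy d bC (α.smulRight e) s _, stmt1.homotopy_eq_zero d bC _ s hD.eq_zero,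
    stmt1.isDiagEquivariant_homotopy d bC _ s _, fun k p q hpq =>
      stmt1.homotopy_spec hD hs hηδ hD₀ hdd k hpq, ?_⟩
  exact (stmt1.homotopy_spec_zero hD hs hD₀).trans (stmt1.tensorDiffMap_zero_zero _ _)

/-- uniqueness up to chain homotopy.  Let `π`, `ε`, `C`, `α`
be as in Davis' existence theorem for chain diagonal approximations: `C` a
chain complex of finitely generated free left `ℤ[π]`-modules with chosen
bases in degrees `0, …, n` whose augmented complex is exact.  If `{Δ_i}` and
`{Δ'_i}` are two families of `ℤ[π]`-module maps
`Δ_i, Δ'_i : C_* → (C ⊗_ℤ C)_{*+i}` each satisfying conditions (0)–(iv) of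
that theorem, then `Δ₀` and `Δ'₀` are chain homotopic as `ℤ[π]`-module chain
maps: there is a `ℤ[π]`-module map `H : C_* → (C ⊗_ℤ C)_{*+1}` with
`Δ₀ - Δ'₀ = ∂_⊗H + H∂`. -/
theorem stmt_1 (π : Type*) [Group π] (ε : ℤ) (hε : ε = 1 ∨ ε = -1) (n : ℕ)
    (C : ℕ → Type*) [∀ k, AddCommGroup (C k)]
    [∀ k, Module (MonoidAlgebra ℤ π) (C k)]
    (ι : ℕ → Type*) [∀ k, Fintype (ι k)]
    (bC : ∀ k, Module.Basis (ι k) (MonoidAlgebra ℤ π) (C k))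
    (hbound : ∀ k, n < k → Subsingleton (C k))
    (d : ∀ k, C (k + 1) →ₗ[MonoidAlgebra ℤ π] C k)
    (hdd : ∀ k (x : C (k + 2)), d k (d (k + 1) x) = 0)
    (i₀ : ι 0)
    (haugd : ∀ x : C 1, stmt1.alphaMap (bC 0) i₀ (d 0 x) = 0)
    (hsurj : Function.Surjective (stmt1.alphaMap (bC 0) i₀))
    (hexact0 : ∀ x : C 0, stmt1.alphaMap (bC 0) i₀ x = 0 → ∃ y, d 0 y = x)
    (hexact : ∀ k (x : C (k + 1)), d k x = 0 → ∃ y, d (k + 1) y = x)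
    (Δ Δ' : ∀ i k p q : ℕ, C k →ₗ[ℤ] (C p ⊗[ℤ] C q))
    (hΔ : stmt1.IsDiagApprox n C d (stmt1.alphaMap (bC 0) i₀) ε Δ)
    (hΔ' : stmt1.IsDiagApprox n C d (stmt1.alphaMap (bC 0) i₀) ε Δ') :
    ∃ H : ∀ k p q : ℕ, C k →ₗ[ℤ] (C p ⊗[ℤ] C q),
      -- H is a degree-1 family: components vanish unless p + q = k + 1
      (∀ k p q : ℕ, p + q ≠ k + 1 → H k p q = 0) ∧
      -- H is a ℤ[π]-module map for the diagonal action
      (∀ (k p q : ℕ) (g : π) (x : C k),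
        H k p q (stmt1.actL (C k) g x)
          = TensorProduct.map (stmt1.actL (C p) g) (stmt1.actL (C q) g)
              (H k p q x)) ∧
      -- Δ₀ - Δ'₀ = ∂_⊗ H + H ∂, on C_{k+1} …
      (∀ k p q : ℕ, p + q = k + 1 →
        Δ 0 (k + 1) p q - Δ' 0 (k + 1) p q
          = id (α := C (k + 1) →ₗ[ℤ] C p ⊗[ℤ] C q) (TensorProduct.map LinearMap.id (stmt1.zres (d q)) ∘ₗ H (k + 1) p (q + 1)
            + ((-1 : ℤ) ^ q) •
                (TensorProduct.map (stmt1.zres (d p)) LinearMap.id ∘ₗ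
                  H (k + 1) (p + 1) q))
            + H k p q ∘ₗ stmt1.zres (d k)) ∧
      -- … and on C₀ (where ∂ = 0)
      (Δ 0 0 0 0 - Δ' 0 0 0 0
        = TensorProduct.map LinearMap.id (stmt1.zres (d 0)) ∘ₗ H 0 0 1
          + TensorProduct.map (stmt1.zres (d 0)) LinearMap.id ∘ₗ H 0 1 0) :=
  stmt_1_general π ε n C ι bC d hdd i₀ haugd hsurj hexact0 hexact Δ Δ' hΔ hΔ'
end

section
/- Let F be the free group on generators g₁, …, g_a, ρ: F → π a group homomorphism to a group π, M a left ℤ[π]-module regarded as an F-module via ρ, and α: F → M a derivation (α(uv) = α(u) + u·α(v) for all u, v ∈ F). Then for every choice of elements n₁, …, n_a ∈ M ⊗_ℤ M there exists a unique map γ: F → M ⊗_ℤ M such that γ(g_i) = n_i for all i and γ(uv) = γ(u) + u·γ(v) + α(u) ⊗ u·α(v) for all u, v ∈ F; moreover any such γ satisfies γ(1) = 0. -/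
open scoped TensorProduct

/-- The action of an element `u` of the free group `F` on a left
`ℤ[π]`-module `M`, via a homomorphism `ρ : F → π`, as a `ℤ`-linear map. -/
noncomputable def stmt2.actM {a : ℕ} {π : Type*} [Group π]
    (ρ : FreeGroup (Fin a) →* π) (M : Type*) [AddCommGroup M]
    [Module (MonoidAlgebra ℤ π) M] (u : FreeGroup (Fin a)) : M →ₗ[ℤ] M :=
  (DistribMulAction.toAddMonoidHom M
    ((MonoidAlgebra.of ℤ π (ρ u)) : MonoidAlgebra ℤ π)).toIntLinearMap

/-- The diagonal action of `u ∈ F` on `M ⊗_ℤ M`: `u·(x⊗y) = ux⊗uy`. -/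
noncomputable def stmt2.actT {a : ℕ} {π : Type*} [Group π]
    (ρ : FreeGroup (Fin a) →* π) (M : Type*) [AddCommGroup M]
    [Module (MonoidAlgebra ℤ π) M] (u : FreeGroup (Fin a)) :
    M ⊗[ℤ] M →ₗ[ℤ] M ⊗[ℤ] M :=
  TensorProduct.map (stmt2.actM ρ M u) (stmt2.actM ρ M u)

namespace stmt2aux

variable {a : ℕ} {π : Type*} [Group π] (ρ : FreeGroup (Fin a) →* π) (M : Type*)
  [AddCommGroup M] [Module (MonoidAlgebra ℤ π) M]

lemma actM_apply (u : FreeGroup (Fin a)) (m : M) :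
    stmt2.actM ρ M u m = (MonoidAlgebra.of ℤ π (ρ u)) • m := rfl

lemma actM_mul_apply (u v : FreeGroup (Fin a)) (m : M) :
    stmt2.actM ρ M (u * v) m = stmt2.actM ρ M u (stmt2.actM ρ M v m) := by
  rw [actM_apply, actM_apply, actM_apply, map_mul ρ, map_mul (MonoidAlgebra.of ℤ π), mul_smul]

lemma actM_one_apply (m : M) : stmt2.actM ρ M 1 m = m := by
  rw [actM_apply, map_one ρ, map_one (MonoidAlgebra.of ℤ π), one_smul]

lemma actM_mul (u v : FreeGroup (Fin a)) :
    stmt2.actM ρ M (u * v) = stmt2.actM ρ M u ∘ₗ stmt2.actM ρ M v := by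
  ext m; simp [actM_mul_apply]

lemma actT_mul_apply (u v : FreeGroup (Fin a)) (x : M ⊗[ℤ] M) :
    stmt2.actT ρ M (u * v) x = stmt2.actT ρ M u (stmt2.actT ρ M v x) := by
  rw [stmt2.actT, actM_mul, TensorProduct.map_comp]; rfl

lemma actT_one_apply (x : M ⊗[ℤ] M) : stmt2.actT ρ M 1 x = x := by
  have : stmt2.actM ρ M (1 : FreeGroup (Fin a)) = LinearMap.id := by
    ext m; simp [actM_one_apply]
  rw [stmt2.actT, this, TensorProduct.map_id]; rfl

lemma actT_tmul (u : FreeGroup (Fin a)) (m m' : M) :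
    stmt2.actT ρ M u (m ⊗ₜ[ℤ] m') = stmt2.actM ρ M u m ⊗ₜ[ℤ] stmt2.actM ρ M u m' := rfl

end stmt2aux

/-- Auxiliary "twisted Heisenberg" group used to construct the cocycle `γ`. -/
@[ext]
structure stmt2aux.TG {a : ℕ} {π : Type*} [Group π] (ρ : FreeGroup (Fin a) →* π)
    (M : Type*) [AddCommGroup M] [Module (MonoidAlgebra ℤ π) M] : Type _ where
  u : FreeGroup (Fin a)
  m : M
  x : M ⊗[ℤ] M

namespace stmt2aux

variable {a : ℕ} {π : Type*} [Group π] {ρ : FreeGroup (Fin a) →* π} {M : Type*}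
  [AddCommGroup M] [Module (MonoidAlgebra ℤ π) M]

noncomputable instance : Group (TG ρ M) where
  mul p q := ⟨p.u * q.u, p.m + stmt2.actM ρ M p.u q.m,
    p.x + stmt2.actT ρ M p.u q.x + p.m ⊗ₜ[ℤ] stmt2.actM ρ M p.u q.m⟩
  one := ⟨1, 0, 0⟩
  inv p := ⟨p.u⁻¹, -(stmt2.actM ρ M p.u⁻¹ p.m),
    stmt2.actT ρ M p.u⁻¹ (p.m ⊗ₜ[ℤ] p.m - p.x)⟩
  mul_assoc p q r := by
    ext
    · exact mul_assoc _ _ _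
    · show (p.m + stmt2.actM ρ M p.u q.m) + stmt2.actM ρ M (p.u * q.u) r.m
        = p.m + stmt2.actM ρ M p.u (q.m + stmt2.actM ρ M q.u r.m)
      rw [actM_mul_apply, map_add]; abel
    · show (p.x + stmt2.actT ρ M p.u q.x + p.m ⊗ₜ[ℤ] stmt2.actM ρ M p.u q.m)
          + stmt2.actT ρ M (p.u * q.u) r.x
          + (p.m + stmt2.actM ρ M p.u q.m) ⊗ₜ[ℤ] stmt2.actM ρ M (p.u * q.u) r.m
        = p.x + stmt2.actT ρ M p.u (q.x + stmt2.actT ρ M q.u r.x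
            + q.m ⊗ₜ[ℤ] stmt2.actM ρ M q.u r.m)
          + p.m ⊗ₜ[ℤ] stmt2.actM ρ M p.u (q.m + stmt2.actM ρ M q.u r.m)
      simp only [actT_mul_apply, actM_mul_apply, map_add, actT_tmul,
        TensorProduct.add_tmul, TensorProduct.tmul_add]
      abel
  one_mul p := by
    ext
    · exact one_mul _
    · show (0 : M) + stmt2.actM ρ M 1 p.m = p.m
      rw [actM_one_apply, zero_add]
    · show (0 : M ⊗[ℤ] M) + stmt2.actT ρ M 1 p.x + (0 : M) ⊗ₜ[ℤ] stmt2.actM ρ M 1 p.m = p.x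
      rw [actT_one_apply, TensorProduct.zero_tmul, zero_add, add_zero]
  mul_one p := by
    ext
    · exact mul_one _
    · show p.m + stmt2.actM ρ M p.u 0 = p.m
      rw [map_zero, add_zero]
    · show p.x + stmt2.actT ρ M p.u 0 + p.m ⊗ₜ[ℤ] stmt2.actM ρ M p.u 0 = p.x
      rw [map_zero, map_zero, TensorProduct.tmul_zero, add_zero, add_zero]
  inv_mul_cancel p := by
    ext
    · exact inv_mul_cancel _
    · show -(stmt2.actM ρ M p.u⁻¹ p.m) + stmt2.actM ρ M p.u⁻¹ p.m = 0
      abel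
    · show stmt2.actT ρ M p.u⁻¹ (p.m ⊗ₜ[ℤ] p.m - p.x)
        + stmt2.actT ρ M p.u⁻¹ p.x
        + (-(stmt2.actM ρ M p.u⁻¹ p.m)) ⊗ₜ[ℤ] stmt2.actM ρ M p.u⁻¹ p.m = 0
      rw [map_sub, TensorProduct.neg_tmul, ← actT_tmul]
      abel

lemma mul_u (p q : TG ρ M) : (p * q).u = p.u * q.u := rfl
lemma mul_m (p q : TG ρ M) : (p * q).m = p.m + stmt2.actM ρ M p.u q.m := rfl
lemma mul_x (p q : TG ρ M) :
    (p * q).x = p.x + stmt2.actT ρ M p.u q.x + p.m ⊗ₜ[ℤ] stmt2.actM ρ M p.u q.m := rfl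
lemma one_u : (1 : TG ρ M).u = 1 := rfl
lemma one_m : (1 : TG ρ M).m = 0 := rfl
lemma one_x : (1 : TG ρ M).x = 0 := rfl
lemma inv_u (p : TG ρ M) : (p⁻¹).u = p.u⁻¹ := rfl
lemma inv_m (p : TG ρ M) : (p⁻¹).m = -(stmt2.actM ρ M p.u⁻¹ p.m) := rfl
lemma inv_x (p : TG ρ M) :
    (p⁻¹).x = stmt2.actT ρ M p.u⁻¹ (p.m ⊗ₜ[ℤ] p.m - p.x) := rfl

end stmt2aux


/-- Let `F` be the free group on generators `g₁, …, g_a`,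
`ρ : F → π` a group homomorphism to a group `π`, `M` a left `ℤ[π]`-module
regarded as an `F`-module via `ρ`, and `α : F → M` a derivation
(`α(uv) = α(u) + u·α(v)`).  Then for every choice of elements
`n₁, …, n_a ∈ M ⊗_ℤ M` there exists a unique map `γ : F → M ⊗_ℤ M` with
`γ(g_i) = n_i` and `γ(uv) = γ(u) + u·γ(v) + α(u) ⊗ u·α(v)` for all `u, v ∈ F`
(where `M ⊗_ℤ M` carries the diagonal `F`-action); moreover any such `γ`
satisfies `γ(1) = 0`. -/
theorem stmt_2 (a : ℕ) (π : Type*) [Group π] (M : Type*) [AddCommGroup M]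
    [Module (MonoidAlgebra ℤ π) M] (ρ : FreeGroup (Fin a) →* π)
    (α : FreeGroup (Fin a) → M)
    (hα : ∀ u v : FreeGroup (Fin a), α (u * v) = α u + stmt2.actM ρ M u (α v))
    (nval : Fin a → M ⊗[ℤ] M) :
    (∃! γ : FreeGroup (Fin a) → M ⊗[ℤ] M,
      (∀ i : Fin a, γ (FreeGroup.of i) = nval i) ∧
      (∀ u v : FreeGroup (Fin a),
        γ (u * v) = γ u + stmt2.actT ρ M u (γ v)
          + (α u) ⊗ₜ[ℤ] (stmt2.actM ρ M u (α v)))) ∧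
    (∀ γ : FreeGroup (Fin a) → M ⊗[ℤ] M,
      ((∀ i : Fin a, γ (FreeGroup.of i) = nval i) ∧
       (∀ u v : FreeGroup (Fin a),
         γ (u * v) = γ u + stmt2.actT ρ M u (γ v)
           + (α u) ⊗ₜ[ℤ] (stmt2.actM ρ M u (α v)))) →
      γ 1 = 0) := by

  classical
  open stmt2aux in
  -- basic facts about the derivation α
  have hα1 : α 1 = 0 := by
    have h := hα 1 1
    rw [one_mul] at h
    have h0 : stmt2.actM ρ M 1 (α 1) = 0 := left_eq_add.mp h
    rw [actM_one_apply] at h0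
    exact h0
  have hαinv : ∀ w : FreeGroup (Fin a),
      α w⁻¹ = -(stmt2.actM ρ M w⁻¹ (α w)) := by
    intro w
    have h := hα w⁻¹ w
    rw [inv_mul_cancel, hα1] at h
    exact eq_neg_of_add_eq_zero_left h.symm
  -- γ(1) = 0 for any γ satisfying the product rule
  have hone : ∀ γ : FreeGroup (Fin a) → M ⊗[ℤ] M,
      (∀ u v : FreeGroup (Fin a),
        γ (u * v) = γ u + stmt2.actT ρ M u (γ v)
          + (α u) ⊗ₜ[ℤ] (stmt2.actM ρ M u (α v))) → γ 1 = 0 := by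
    intro γ h2
    have h := h2 1 1
    rw [one_mul, actT_one_apply, hα1, TensorProduct.zero_tmul, add_zero] at h
    have := left_eq_add.mp h
    exact this
  -- the value of γ on inverses is determined
  have hinv : ∀ γ : FreeGroup (Fin a) → M ⊗[ℤ] M,
      (∀ u v : FreeGroup (Fin a),
        γ (u * v) = γ u + stmt2.actT ρ M u (γ v)
          + (α u) ⊗ₜ[ℤ] (stmt2.actM ρ M u (α v))) →
      ∀ w : FreeGroup (Fin a),
        γ w⁻¹ = stmt2.actT ρ M w⁻¹
          (-(γ w) - (α w) ⊗ₜ[ℤ] (stmt2.actM ρ M w (α w⁻¹))) := by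
    intro γ h2 w
    have h := h2 w w⁻¹
    rw [mul_inv_cancel, hone γ h2] at h
    have h' : stmt2.actT ρ M w (γ w⁻¹)
        = -(γ w) - (α w) ⊗ₜ[ℤ] (stmt2.actM ρ M w (α w⁻¹)) := by
      calc stmt2.actT ρ M w (γ w⁻¹)
          = (γ w + stmt2.actT ρ M w (γ w⁻¹)
              + (α w) ⊗ₜ[ℤ] (stmt2.actM ρ M w (α w⁻¹)))
            - γ w - (α w) ⊗ₜ[ℤ] (stmt2.actM ρ M w (α w⁻¹)) := by abel
        _ = 0 - γ w - (α w) ⊗ₜ[ℤ] (stmt2.actM ρ M w (α w⁻¹)) := by rw [← h]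
        _ = _ := by abel
    calc γ w⁻¹ = stmt2.actT ρ M (w⁻¹ * w) (γ w⁻¹) := by
          rw [inv_mul_cancel, actT_one_apply]
      _ = stmt2.actT ρ M w⁻¹ (stmt2.actT ρ M w (γ w⁻¹)) := by rw [actT_mul_apply]
      _ = _ := by rw [h']
  -- construct γ via a homomorphism into the twisted Heisenberg group
  set φ : FreeGroup (Fin a) →* TG ρ M :=
    FreeGroup.lift (fun i => ⟨FreeGroup.of i, α (FreeGroup.of i), nval i⟩) with hφ
  have hφof : ∀ i, φ (FreeGroup.of i)
      = ⟨FreeGroup.of i, α (FreeGroup.of i), nval i⟩ := by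
    intro i; rw [hφ, FreeGroup.lift_apply_of]
  have hu : ∀ w : FreeGroup (Fin a), (φ w).u = w := by
    let projU : TG ρ M →* FreeGroup (Fin a) :=
      { toFun := TG.u, map_one' := rfl, map_mul' := fun _ _ => rfl }
    have : projU.comp φ = MonoidHom.id _ := by
      apply FreeGroup.ext_hom
      intro i
      show (φ (FreeGroup.of i)).u = FreeGroup.of i
      rw [hφof]
    intro w
    exact DFunLike.congr_fun this w
  have hm : ∀ w : FreeGroup (Fin a), (φ w).m = α w := by
    intro w
    refine FreeGroup.induction_on w ?_ ?_ ?_ ?_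
    · rw [map_one, one_m, hα1]
    · intro i
      show (φ (FreeGroup.of i)).m = α (FreeGroup.of i)
      rw [hφof]
    · intro x ih
      rw [map_inv, inv_m, hu, ih, hαinv]
    · intro x y ihx ihy
      rw [map_mul, mul_m, hu, ihx, ihy, hα]
  refine ⟨⟨fun w => (φ w).x, ⟨?_, ?_⟩, ?_⟩, fun γ h => hone γ h.2⟩
  · intro i
    show (φ (FreeGroup.of i)).x = nval i
    rw [hφof]
  · intro u v
    show (φ (u * v)).x = (φ u).x + stmt2.actT ρ M u ((φ v).x)
      + (α u) ⊗ₜ[ℤ] (stmt2.actM ρ M u (α v))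
    rw [map_mul, mul_x, hu, hm, hm]
  · -- uniqueness
    intro γ ⟨h1, h2⟩
    funext w
    refine FreeGroup.induction_on w ?_ ?_ ?_ ?_
    · rw [hone γ h2]
      have : (φ (1 : FreeGroup (Fin a))).x = 0 := by rw [map_one, one_x]
      rw [this]
    · intro i
      show γ (FreeGroup.of i) = (φ (FreeGroup.of i)).x
      rw [h1 i, hφof]
    · intro x ih
      have h2' : ∀ u v : FreeGroup (Fin a),
          (fun w => (φ w).x) (u * v) = (fun w => (φ w).x) u
            + stmt2.actT ρ M u ((fun w => (φ w).x) v)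
            + (α u) ⊗ₜ[ℤ] (stmt2.actM ρ M u (α v)) := by
        intro u v
        show (φ (u * v)).x = (φ u).x + stmt2.actT ρ M u ((φ v).x)
          + (α u) ⊗ₜ[ℤ] (stmt2.actM ρ M u (α v))
        rw [map_mul, mul_x, hu, hm, hm]
      have ih' : γ (FreeGroup.of x) = (φ (FreeGroup.of x)).x := ih
      have e1 := hinv γ h2 (FreeGroup.of x)
      have e2 := hinv (fun w => (φ w).x) h2' (FreeGroup.of x)
      show γ (FreeGroup.of x)⁻¹ = (φ (FreeGroup.of x)⁻¹).x
      rw [e1, e2, ih']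
    · intro x y ihx ihy
      rw [h2, ihx, ihy, map_mul, mul_x, hu, hm, hm]
end

section
/- Let α: F → M be a derivation and let γ: F → M ⊗_ℤ M be the unique map with γ(g_m) = 0 for all generators g_m and γ(uv) = γ(u) + u·γ(v) + α(u) ⊗ u·α(v). Suppose i, j, k are indices such that ρ(g_i⁻¹ g_k g_j g_k⁻¹) = 1 in π (as holds for a Wirtinger relator of a knot group). Writing h_m := α(g_m), one has γ(g_i⁻¹ g_k g_j g_k⁻¹) = (g_i⁻¹h_i ⊗ g_i⁻¹h_i) − (g_i⁻¹h_i ⊗ g_i⁻¹h_k) + (h_k ⊗ h_k) − (g_i⁻¹g_k h_j ⊗ h_k) + (g_i⁻¹h_k − g_i⁻¹h_i) ⊗ (g_i⁻¹g_k h_j − h_k). -/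
open scoped TensorProduct

/-- The action of an element `u` of the free group `F` on a left
`ℤ[π]`-module `M`, via a homomorphism `ρ : F → π`, as a `ℤ`-linear map. -/
noncomputable def stmt4.actM {a : ℕ} {π : Type*} [Group π]
    (ρ : FreeGroup (Fin a) →* π) (M : Type*) [AddCommGroup M]
    [Module (MonoidAlgebra ℤ π) M] (u : FreeGroup (Fin a)) : M →ₗ[ℤ] M :=
  (DistribMulAction.toAddMonoidHom M
    ((MonoidAlgebra.of ℤ π (ρ u)) : MonoidAlgebra ℤ π)).toIntLinearMap

/-- The diagonal action of `u ∈ F` on `M ⊗_ℤ M`: `u·(x⊗y) = ux⊗uy`. -/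
noncomputable def stmt4.actT {a : ℕ} {π : Type*} [Group π]
    (ρ : FreeGroup (Fin a) →* π) (M : Type*) [AddCommGroup M]
    [Module (MonoidAlgebra ℤ π) M] (u : FreeGroup (Fin a)) :
    M ⊗[ℤ] M →ₗ[ℤ] M ⊗[ℤ] M :=
  TensorProduct.map (stmt4.actM ρ M u) (stmt4.actM ρ M u)

namespace stmt4
variable {a : ℕ} {π : Type*} [Group π] (ρ : FreeGroup (Fin a) →* π)
  (M : Type*) [AddCommGroup M] [Module (MonoidAlgebra ℤ π) M]

lemma actM_apply (u : FreeGroup (Fin a)) (x : M) :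
    actM ρ M u x = ((MonoidAlgebra.of ℤ π (ρ u)) : MonoidAlgebra ℤ π) • x := rfl

lemma actM_congr {u v : FreeGroup (Fin a)} (h : ρ u = ρ v) :
    actM ρ M u = actM ρ M v := by unfold actM; rw [h]

lemma actM_mul (u v : FreeGroup (Fin a)) (x : M) :
    actM ρ M (u * v) x = actM ρ M u (actM ρ M v x) := by
  rw [actM_apply, actM_apply, actM_apply, map_mul, map_mul, mul_smul]

lemma actM_one (x : M) : actM ρ M 1 x = x := by
  simp [actM_apply, map_one, one_smul]

lemma actM_one' : actM ρ M 1 = LinearMap.id := LinearMap.ext (actM_one ρ M)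

lemma actT_tmul (u : FreeGroup (Fin a)) (x y : M) :
    actT ρ M u (x ⊗ₜ[ℤ] y) = actM ρ M u x ⊗ₜ[ℤ] actM ρ M u y := rfl

lemma actT_one (z : M ⊗[ℤ] M) : actT ρ M 1 z = z := by
  rw [actT, actM_one', TensorProduct.map_id]; rfl

end stmt4

/-- Let `α : F → M` be a derivation and `γ : F → M ⊗_ℤ M` the
unique map with `γ(g_m) = 0` for all generators and
`γ(uv) = γ(u) + u·γ(v) + α(u) ⊗ u·α(v)`.  Suppose `i, j, k` are indices with
`ρ(g_i⁻¹ g_k g_j g_k⁻¹) = 1` in `π` (as for a Wirtinger relator of a knot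
group).  Writing `h_m := α(g_m)`, one has
`γ(g_i⁻¹g_kg_jg_k⁻¹) = (g_i⁻¹h_i ⊗ g_i⁻¹h_i) - (g_i⁻¹h_i ⊗ g_i⁻¹h_k)
  + (h_k ⊗ h_k) - (g_i⁻¹g_kh_j ⊗ h_k)
  + (g_i⁻¹h_k - g_i⁻¹h_i) ⊗ (g_i⁻¹g_kh_j - h_k)`. -/
theorem stmt_4 (a : ℕ) (π : Type*) [Group π] (M : Type*) [AddCommGroup M]
    [Module (MonoidAlgebra ℤ π) M] (ρ : FreeGroup (Fin a) →* π)
    (α : FreeGroup (Fin a) → M)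
    (hα : ∀ u v : FreeGroup (Fin a), α (u * v) = α u + stmt4.actM ρ M u (α v))
    (γ : FreeGroup (Fin a) → M ⊗[ℤ] M)
    (hγ0 : ∀ m : Fin a, γ (FreeGroup.of m) = 0)
    (hγ : ∀ u v : FreeGroup (Fin a),
      γ (u * v) = γ u + stmt4.actT ρ M u (γ v)
        + (α u) ⊗ₜ[ℤ] (stmt4.actM ρ M u (α v)))
    (i j k : Fin a)
    (hrel : ρ ((FreeGroup.of i)⁻¹ * FreeGroup.of k * FreeGroup.of j
      * (FreeGroup.of k)⁻¹) = 1) :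
    γ ((FreeGroup.of i)⁻¹ * FreeGroup.of k * FreeGroup.of j
        * (FreeGroup.of k)⁻¹)
      = (stmt4.actM ρ M (FreeGroup.of i)⁻¹ (α (FreeGroup.of i)))
          ⊗ₜ[ℤ] (stmt4.actM ρ M (FreeGroup.of i)⁻¹ (α (FreeGroup.of i)))
        - (stmt4.actM ρ M (FreeGroup.of i)⁻¹ (α (FreeGroup.of i)))
          ⊗ₜ[ℤ] (stmt4.actM ρ M (FreeGroup.of i)⁻¹ (α (FreeGroup.of k)))
        + (α (FreeGroup.of k)) ⊗ₜ[ℤ] (α (FreeGroup.of k))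
        - (stmt4.actM ρ M ((FreeGroup.of i)⁻¹ * FreeGroup.of k)
            (α (FreeGroup.of j))) ⊗ₜ[ℤ] (α (FreeGroup.of k))
        + ((stmt4.actM ρ M (FreeGroup.of i)⁻¹ (α (FreeGroup.of k)))
            - (stmt4.actM ρ M (FreeGroup.of i)⁻¹ (α (FreeGroup.of i))))
          ⊗ₜ[ℤ] ((stmt4.actM ρ M ((FreeGroup.of i)⁻¹ * FreeGroup.of k)
            (α (FreeGroup.of j))) - (α (FreeGroup.of k))) := by
  have hα1 : α 1 = 0 := by
    have h := hα 1 1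
    rw [mul_one, stmt4.actM_one] at h
    exact (left_eq_add.mp h)
  have hγ1 : γ 1 = 0 := by
    have h := hγ 1 1
    rw [mul_one, stmt4.actT_one, hα1, TensorProduct.zero_tmul, add_zero] at h
    exact (left_eq_add.mp h)
  have hαinv : ∀ u : FreeGroup (Fin a),
      α u⁻¹ = - stmt4.actM ρ M u⁻¹ (α u) := by
    intro u
    have h := hα u⁻¹ u
    rw [inv_mul_cancel, hα1] at h
    exact eq_neg_of_add_eq_zero_left h.symm
  have hγinv : ∀ m : Fin a, γ (FreeGroup.of m)⁻¹ =
      (stmt4.actM ρ M (FreeGroup.of m)⁻¹ (α (FreeGroup.of m))) ⊗ₜ[ℤ]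
      (stmt4.actM ρ M (FreeGroup.of m)⁻¹ (α (FreeGroup.of m))) := by
    intro m
    have h := hγ (FreeGroup.of m)⁻¹ (FreeGroup.of m)
    rw [inv_mul_cancel, hγ1, hγ0, map_zero, add_zero, hαinv,
      TensorProduct.neg_tmul] at h
    exact add_neg_eq_zero.mp h.symm
  have hACgk : stmt4.actM ρ M ((FreeGroup.of i)⁻¹ * FreeGroup.of k * FreeGroup.of j)
      = stmt4.actM ρ M (FreeGroup.of k) := by
    refine stmt4.actM_congr ρ M ?_
    have h := hrel
    rw [map_mul, map_inv, mul_inv_eq_one] at h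
    exact h
  rw [hγ (_ * _ * _) (FreeGroup.of k)⁻¹, hγ (_ * _) (FreeGroup.of j),
    hγ (FreeGroup.of i)⁻¹ (FreeGroup.of k), hγ0 j, hγ0 k, map_zero, map_zero,
    hγinv i, hγinv k, hα ((FreeGroup.of i)⁻¹ * FreeGroup.of k) (FreeGroup.of j),
    hα (FreeGroup.of i)⁻¹ (FreeGroup.of k), hαinv (FreeGroup.of i), hαinv (FreeGroup.of k)]
  simp only [stmt4.actT_tmul, hACgk, map_neg, ← stmt4.actM_mul, mul_inv_cancel,
    stmt4.actM_one, TensorProduct.neg_tmul, TensorProduct.tmul_neg,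
    TensorProduct.add_tmul, TensorProduct.tmul_add, TensorProduct.sub_tmul,
    TensorProduct.tmul_sub, add_zero, zero_add]
  abel
end

section
/- Let α: F → M be a derivation and let γ: F → M ⊗_ℤ M be the unique map with γ(g_m) = 0 for all generators g_m and γ(uv) = γ(u) + u·γ(v) + α(u) ⊗ u·α(v). Suppose λ and μ are two of the generators and ρ(λμλ⁻¹μ⁻¹) = 1 in π (as holds for the longitude and meridian of a knot group, whose commutator is the peripheral torus relator). Writing h_λ := α(λ) and h_μ := α(μ), one has γ(λμλ⁻¹μ⁻¹) = h_λ⊗λh_μ + μ·(h_λ⊗h_λ) + h_μ⊗h_μ + μ·(h_λ⊗μ⁻¹h_μ) − h_λ⊗μh_λ − h_λ⊗h_μ − λ·(h_μ⊗λ⁻¹μh_λ) − λ·(h_μ⊗λ⁻¹h_μ), where · denotes the diagonal action of F on M ⊗_ℤ M. -/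
open scoped TensorProduct

/-!
Every term of the formula comes from expanding `γ` along the word `λ · μ · λ⁻¹ · μ⁻¹` with the
product rule, using `γ(u⁻¹) = u⁻¹·(α u ⊗ α u - γ u)` and `α(u⁻¹) = -u⁻¹·α u`. The relation
`ρ(λμλ⁻¹μ⁻¹) = 1` lets `λμλ⁻¹` act as `μ` and the whole commutator act trivially, which collapses
the group elements acting on each term.
-/

/-- The action of an element `u` of the free group `F` on a left
`ℤ[π]`-module `M`, via a homomorphism `ρ : F → π`, as a `ℤ`-linear map. -/
noncomputable def stmt5.actM {a : ℕ} {π : Type*} [Group π]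
    (ρ : FreeGroup (Fin a) →* π) (M : Type*) [AddCommGroup M]
    [Module (MonoidAlgebra ℤ π) M] (u : FreeGroup (Fin a)) : M →ₗ[ℤ] M :=
  (DistribMulAction.toAddMonoidHom M
    ((MonoidAlgebra.of ℤ π (ρ u)) : MonoidAlgebra ℤ π)).toIntLinearMap

/-- The diagonal action of `u ∈ F` on `M ⊗_ℤ M`: `u·(x⊗y) = ux⊗uy`. -/
noncomputable def stmt5.actT {a : ℕ} {π : Type*} [Group π]
    (ρ : FreeGroup (Fin a) →* π) (M : Type*) [AddCommGroup M]
    [Module (MonoidAlgebra ℤ π) M] (u : FreeGroup (Fin a)) :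
    M ⊗[ℤ] M →ₗ[ℤ] M ⊗[ℤ] M :=
  TensorProduct.map (stmt5.actM ρ M u) (stmt5.actM ρ M u)

namespace stmt5

variable {a : ℕ} {π : Type*} [Group π] (ρ : FreeGroup (Fin a) →* π)
  (M : Type*) [AddCommGroup M] [Module (MonoidAlgebra ℤ π) M]

lemma actM_apply (u : FreeGroup (Fin a)) (x : M) :
    actM ρ M u x = (MonoidAlgebra.of ℤ π (ρ u) : MonoidAlgebra ℤ π) • x := rfl

lemma actM_mul (u v : FreeGroup (Fin a)) :
    actM ρ M (u * v) = actM ρ M u ∘ₗ actM ρ M v :=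
  LinearMap.ext fun x => by simp only [LinearMap.comp_apply, actM_apply, map_mul, mul_smul]

lemma actM_mul_apply (u v : FreeGroup (Fin a)) (x : M) :
    actM ρ M (u * v) x = actM ρ M u (actM ρ M v x) := by
  rw [actM_mul, LinearMap.comp_apply]

lemma actM_congr {u v : FreeGroup (Fin a)} (h : ρ u = ρ v) : actM ρ M u = actM ρ M v := by
  rw [actM, actM, h]

lemma actM_eq_id {u : FreeGroup (Fin a)} (h : ρ u = 1) : actM ρ M u = LinearMap.id :=
  LinearMap.ext fun x => by simp only [actM_apply, h, MonoidAlgebra.of_apply,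
    ← MonoidAlgebra.one_def, one_smul, LinearMap.id_apply]

lemma actM_inv_apply_self (u : FreeGroup (Fin a)) (x : M) :
    actM ρ M u⁻¹ (actM ρ M u x) = x := by
  rw [← actM_mul_apply, actM_eq_id ρ M (by rw [inv_mul_cancel, map_one]), LinearMap.id_apply]

lemma actM_self_apply_inv (u : FreeGroup (Fin a)) (x : M) :
    actM ρ M u (actM ρ M u⁻¹ x) = x := by
  simpa only [inv_inv] using actM_inv_apply_self ρ M u⁻¹ x

lemma actT_tmul (u : FreeGroup (Fin a)) (x y : M) :
    actT ρ M u (x ⊗ₜ[ℤ] y) = actM ρ M u x ⊗ₜ[ℤ] actM ρ M u y := rfl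

lemma actT_mul_apply (u v : FreeGroup (Fin a)) (z : M ⊗[ℤ] M) :
    actT ρ M (u * v) z = actT ρ M u (actT ρ M v z) := by
  rw [actT, actM_mul, TensorProduct.map_comp]
  rfl

lemma actT_congr {u v : FreeGroup (Fin a)} (h : ρ u = ρ v) : actT ρ M u = actT ρ M v := by
  rw [actT, actT, actM_congr ρ M h]

lemma actT_eq_id {u : FreeGroup (Fin a)} (h : ρ u = 1) : actT ρ M u = LinearMap.id := by
  rw [actT, actM_eq_id ρ M h]
  exact TensorProduct.map_id

@[simp]
lemma actM_one : actM ρ M 1 = LinearMap.id := actM_eq_id ρ M (map_one ρ)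

@[simp]
lemma actT_one : actT ρ M 1 = LinearMap.id := actT_eq_id ρ M (map_one ρ)

lemma actT_inv_apply_self (u : FreeGroup (Fin a)) (z : M ⊗[ℤ] M) :
    actT ρ M u⁻¹ (actT ρ M u z) = z := by
  rw [← actT_mul_apply, actT_eq_id ρ M (by rw [inv_mul_cancel, map_one]), LinearMap.id_apply]

def IsDerivation (α : FreeGroup (Fin a) → M) : Prop :=
  ∀ u v, α (u * v) = α u + actM ρ M u (α v)

/-- `γ` is a cochain whose coboundary is `-(α ⌣ α)`. -/
def IsCupPrimitive (α : FreeGroup (Fin a) → M) (γ : FreeGroup (Fin a) → M ⊗[ℤ] M) : Prop :=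
  ∀ u v, γ (u * v) = γ u + actT ρ M u (γ v) + α u ⊗ₜ[ℤ] actM ρ M u (α v)

variable {ρ M} {α : FreeGroup (Fin a) → M} {γ : FreeGroup (Fin a) → M ⊗[ℤ] M}

namespace IsDerivation

lemma map_one (hα : IsDerivation ρ M α) : α 1 = 0 := by
  simpa only [one_mul, actM_one, LinearMap.id_apply, left_eq_add] using hα 1 1

lemma map_inv (hα : IsDerivation ρ M α) (u : FreeGroup (Fin a)) :
    α u⁻¹ = -actM ρ M u⁻¹ (α u) := by
  have h : α u + actM ρ M u (α u⁻¹) = 0 := by rw [← hα u u⁻¹, mul_inv_cancel, hα.map_one]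
  rw [← actM_inv_apply_self ρ M u (α u⁻¹), eq_neg_add_of_add_eq h, add_zero, map_neg]

lemma map_conj (hα : IsDerivation ρ M α) {u v : FreeGroup (Fin a)} (h : ρ (u * v * u⁻¹) = ρ v) :
    α (u * v * u⁻¹) = α u + actM ρ M u (α v) - actM ρ M v (α u) := by
  rw [hα (u * v) u⁻¹, hα u v, hα.map_inv u, map_neg, ← actM_mul_apply, actM_congr ρ M h,
    sub_eq_add_neg]

end IsDerivation

namespace IsCupPrimitive

lemma map_one (hγ : IsCupPrimitive ρ M α γ) (hα : IsDerivation ρ M α) : γ 1 = 0 := by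
  simpa only [one_mul, actT_one, LinearMap.id_apply, hα.map_one,
    TensorProduct.zero_tmul, add_zero, left_eq_add] using hγ 1 1

lemma map_inv (hγ : IsCupPrimitive ρ M α γ) (hα : IsDerivation ρ M α) (u : FreeGroup (Fin a)) :
    γ u⁻¹ = actT ρ M u⁻¹ (α u ⊗ₜ[ℤ] α u - γ u) := by
  have h := hγ u u⁻¹
  rw [mul_inv_cancel, hγ.map_one hα, hα.map_inv u, map_neg, actM_self_apply_inv,
    TensorProduct.tmul_neg, ← sub_eq_add_neg, eq_comm, sub_eq_zero] at h
  rw [← actT_inv_apply_self ρ M u (γ u⁻¹), eq_sub_of_add_eq' h]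

lemma map_conj (hγ : IsCupPrimitive ρ M α γ) (hα : IsDerivation ρ M α) {u v : FreeGroup (Fin a)}
    (h : ρ (u * v * u⁻¹) = ρ v) :
    γ (u * v * u⁻¹) = γ u + actT ρ M u (γ v) - actT ρ M v (γ u)
      + α u ⊗ₜ[ℤ] actM ρ M u (α v) + actT ρ M v (α u ⊗ₜ[ℤ] α u)
      - α u ⊗ₜ[ℤ] actM ρ M v (α u) - actM ρ M u (α v) ⊗ₜ[ℤ] actM ρ M v (α u) := by
  rw [hγ (u * v) u⁻¹, hγ u v, hγ.map_inv hα u, ← actT_mul_apply, actT_congr ρ M h, hα u v,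
    hα.map_inv u, map_neg, ← actM_mul_apply, actM_congr ρ M h, map_sub, TensorProduct.tmul_neg,
    TensorProduct.add_tmul]
  abel

lemma map_mul_inv (hγ : IsCupPrimitive ρ M α γ) (hα : IsDerivation ρ M α)
    {w v : FreeGroup (Fin a)} (h : ρ w = ρ v) :
    γ (w * v⁻¹) = γ w - γ v + α v ⊗ₜ[ℤ] α v - α w ⊗ₜ[ℤ] α v := by
  have hwv : ρ (w * v⁻¹) = 1 := by rw [map_mul, _root_.map_inv, h, mul_inv_cancel]
  rw [hγ w v⁻¹, hγ.map_inv hα v, ← actT_mul_apply, actT_eq_id ρ M hwv, LinearMap.id_apply,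
    hα.map_inv v, map_neg, ← actM_mul_apply, actM_eq_id ρ M hwv, LinearMap.id_apply,
    TensorProduct.tmul_neg]
  abel

lemma map_commutator (hγ : IsCupPrimitive ρ M α γ) (hα : IsDerivation ρ M α)
    {u v : FreeGroup (Fin a)} (h : ρ (u * v * u⁻¹ * v⁻¹) = 1) :
    γ (u * v * u⁻¹ * v⁻¹)
      = α u ⊗ₜ[ℤ] actM ρ M u (α v) + actT ρ M v (α u ⊗ₜ[ℤ] α u) + α v ⊗ₜ[ℤ] α v
        + actT ρ M v (α u ⊗ₜ[ℤ] actM ρ M v⁻¹ (α v)) - α u ⊗ₜ[ℤ] actM ρ M v (α u)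
        - α u ⊗ₜ[ℤ] α v - actT ρ M u (α v ⊗ₜ[ℤ] actM ρ M (u⁻¹ * v) (α u))
        - actT ρ M u (α v ⊗ₜ[ℤ] actM ρ M u⁻¹ (α v))
        + (γ u + actT ρ M u (γ v) - actT ρ M v (γ u) - γ v) := by
  have hconj : ρ (u * v * u⁻¹) = ρ v := by
    rwa [map_mul _ (u * v * u⁻¹), _root_.map_inv, mul_inv_eq_one] at h
  rw [hγ.map_mul_inv hα hconj, hγ.map_conj hα hconj, hα.map_conj hconj]
  simp only [actT_tmul, ← actM_mul_apply, mul_inv_cancel_left, mul_inv_cancel, actM_one,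
    LinearMap.id_apply, TensorProduct.add_tmul, TensorProduct.sub_tmul]
  abel

end IsCupPrimitive

end stmt5

/-- Let `α : F → M` be a derivation and `γ : F → M ⊗_ℤ M` the
unique map with `γ(g_m) = 0` for all generators and
`γ(uv) = γ(u) + u·γ(v) + α(u) ⊗ u·α(v)`.  Suppose `λ, μ` are two of the
generators with `ρ(λμλ⁻¹μ⁻¹) = 1` in `π` (as for the longitude and meridian
of a knot group).  Writing `h_λ := α(λ)`, `h_μ := α(μ)`, one has
`γ(λμλ⁻¹μ⁻¹) = h_λ⊗λh_μ + μ·(h_λ⊗h_λ) + h_μ⊗h_μ + μ·(h_λ⊗μ⁻¹h_μ)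
  - h_λ⊗μh_λ - h_λ⊗h_μ - λ·(h_μ⊗λ⁻¹μh_λ) - λ·(h_μ⊗λ⁻¹h_μ)`,
where `·` denotes the diagonal action of `F` on `M ⊗_ℤ M`. -/
theorem stmt_5 (a : ℕ) (π : Type*) [Group π] (M : Type*) [AddCommGroup M]
    [Module (MonoidAlgebra ℤ π) M] (ρ : FreeGroup (Fin a) →* π)
    (α : FreeGroup (Fin a) → M)
    (hα : ∀ u v : FreeGroup (Fin a), α (u * v) = α u + stmt5.actM ρ M u (α v))
    (γ : FreeGroup (Fin a) → M ⊗[ℤ] M)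
    (hγ0 : ∀ m : Fin a, γ (FreeGroup.of m) = 0)
    (hγ : ∀ u v : FreeGroup (Fin a),
      γ (u * v) = γ u + stmt5.actT ρ M u (γ v)
        + (α u) ⊗ₜ[ℤ] (stmt5.actM ρ M u (α v)))
    (il im : Fin a)
    (hrel : ρ (FreeGroup.of il * FreeGroup.of im * (FreeGroup.of il)⁻¹
      * (FreeGroup.of im)⁻¹) = 1) :
    γ (FreeGroup.of il * FreeGroup.of im * (FreeGroup.of il)⁻¹
        * (FreeGroup.of im)⁻¹)
      = (α (FreeGroup.of il))
          ⊗ₜ[ℤ] (stmt5.actM ρ M (FreeGroup.of il) (α (FreeGroup.of im)))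
        + stmt5.actT ρ M (FreeGroup.of im)
            ((α (FreeGroup.of il)) ⊗ₜ[ℤ] (α (FreeGroup.of il)))
        + (α (FreeGroup.of im)) ⊗ₜ[ℤ] (α (FreeGroup.of im))
        + stmt5.actT ρ M (FreeGroup.of im)
            ((α (FreeGroup.of il)) ⊗ₜ[ℤ]
              (stmt5.actM ρ M (FreeGroup.of im)⁻¹ (α (FreeGroup.of im))))
        - (α (FreeGroup.of il))
            ⊗ₜ[ℤ] (stmt5.actM ρ M (FreeGroup.of im) (α (FreeGroup.of il)))
        - (α (FreeGroup.of il)) ⊗ₜ[ℤ] (α (FreeGroup.of im))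
        - stmt5.actT ρ M (FreeGroup.of il)
            ((α (FreeGroup.of im)) ⊗ₜ[ℤ]
              (stmt5.actM ρ M ((FreeGroup.of il)⁻¹ * FreeGroup.of im)
                (α (FreeGroup.of il))))
        - stmt5.actT ρ M (FreeGroup.of il)
            ((α (FreeGroup.of im)) ⊗ₜ[ℤ]
              (stmt5.actM ρ M (FreeGroup.of il)⁻¹ (α (FreeGroup.of im)))) := by
  rw [stmt5.IsCupPrimitive.map_commutator hγ hα hrel, hγ0, hγ0]
  simp only [map_zero, add_zero, sub_zero]
end

section
/- Let A be a ring with involution and g₁, g_q, l_a, l_b ∈ A units with ḡ₁ = g₁⁻¹, ḡ_q = g_q⁻¹, l̄_a = l_a⁻¹, l̄_b = l_b⁻¹, g_q = l_a⁻¹ g₁ l_a and g₁ = l_b⁻¹ g_q l_b. Let C = C(g₁) ⊕ C(g_q) (so C₁ = C₀ = A², differential diag(g₁−1, g_q−1) acting by right multiplication) with the symmetric structure φ ⊕ −φ given by φ₀ = diag(1, −1): C⁰ → C₁, φ₀ = diag(g₁, −g_q): C¹ → C₀, φ₁ = diag(1, −1): C¹ → C₁. Let D₋ = C(g₁) and D₊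 = C(g_q). Define i₋: C → D₋ in each degree by (x₁, x₂) ↦ x₁ + x₂ l_a⁻¹ and i₊: C → D₊ by (x₁, x₂) ↦ x₁ l_b⁻¹ + x₂. Then i₋ and i₊ are chain maps, and i₋ ∘ (φ ⊕ −φ)_s ∘ i₋* = 0 and i₊ ∘ (−(φ ⊕ −φ))_s ∘ i₊* = 0 for s = 0, 1 and in all degrees; hence (i₋: C → D₋, (0, φ⊕−φ)) and (i₊: C → D₊, (0, −(φ⊕−φ))) satisfy the equations of 2-dimensional symmetric pairs. -/
/-- Let `A` be a ring with involution and `g₁, g_q, l_a, l_b ∈ A`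
units with `star g₁ = g₁⁻¹`, `star g_q = g_q⁻¹`, `star l_a = l_a⁻¹`,
`star l_b = l_b⁻¹`, `g_q = l_a⁻¹ g₁ l_a` and `g₁ = l_b⁻¹ g_q l_b`.
Let `C = C(g₁) ⊕ C(g_q)` (so `C₁ = C₀ = A²`, differential
`(x₁,x₂) ↦ (x₁(g₁-1), x₂(g_q-1))`) with the symmetric structure `φ ⊕ -φ`
given by `φ₀ = diag(1,-1) : C⁰ → C₁`, `φ₀ = diag(g₁,-g_q) : C¹ → C₀`,
`φ₁ = diag(1,-1) : C¹ → C₁`.  Let `D₋ = C(g₁)` and `D₊ = C(g_q)` and define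
`i₋ : C → D₋`, `(x₁,x₂) ↦ x₁ + x₂ l_a⁻¹` and `i₊ : C → D₊`,
`(x₁,x₂) ↦ x₁ l_b⁻¹ + x₂` in each degree.  Then `i₋` and `i₊` are chain maps,
the maps `(φ ⊕ -φ)_s` satisfy the equations of a 1-dimensional symmetric
structure, and `i₋ ∘ (φ⊕-φ)_s ∘ i₋* = 0`, `i₊ ∘ (-(φ⊕-φ))_s ∘ i₊* = 0` for
`s = 0, 1` and in all degrees (where `i* ` is given by the conjugate transpose
matrix); hence `(i₋ : C → D₋, (0, φ⊕-φ))` and `(i₊ : C → D₊, (0, -(φ⊕-φ)))`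
satisfy the equations of 2-dimensional symmetric pairs. -/
theorem stmt_10 (A : Type*) [Ring A] [StarRing A] (g1 gq la lb : Aˣ)
    (hg1 : star (g1 : A) = ((g1⁻¹ : Aˣ) : A))
    (hgq : star (gq : A) = ((gq⁻¹ : Aˣ) : A))
    (hla : star (la : A) = ((la⁻¹ : Aˣ) : A))
    (hlb : star (lb : A) = ((lb⁻¹ : Aˣ) : A))
    (ha : (gq : A) = ((la⁻¹ : Aˣ) : A) * (g1 : A) * (la : A))
    (hb : (g1 : A) = ((lb⁻¹ : Aˣ) : A) * (gq : A) * (lb : A)) :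
    -- i₋ is a chain map
    (∀ x : A × A,
      (x.1 * ((g1 : A) - 1)) + (x.2 * ((gq : A) - 1)) * ((la⁻¹ : Aˣ) : A)
        = (x.1 + x.2 * ((la⁻¹ : Aˣ) : A)) * ((g1 : A) - 1)) ∧
    -- i₊ is a chain map
    (∀ x : A × A,
      (x.1 * ((g1 : A) - 1)) * ((lb⁻¹ : Aˣ) : A) + (x.2 * ((gq : A) - 1))
        = (x.1 * ((lb⁻¹ : Aˣ) : A) + x.2) * ((gq : A) - 1)) ∧
    -- the symmetric structure equations for φ ⊕ -φ on C (dimension n = 1):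
    -- ∂(φ⊕-φ)₀ + (-1)^0 (φ⊕-φ)₀ δ = 0 : C⁰ → C₀
    (∀ x : A × A,
      ((x.1) * ((g1 : A) - 1), (-x.2) * ((gq : A) - 1))
        + ((x.1 * star ((g1 : A) - 1)) * (g1 : A),
           -((x.2 * star ((gq : A) - 1)) * (gq : A))) = 0) ∧
    -- ∂(φ⊕-φ)₁ = (φ⊕-φ)₀ - T(φ⊕-φ)₀ : C¹ → C₀
    (∀ x : A × A,
      ((x.1) * ((g1 : A) - 1), (-x.2) * ((gq : A) - 1))
        = (x.1 * (g1 : A), -(x.2 * (gq : A)))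
          - (x.1 * star (1 : A), x.2 * star (-1 : A))) ∧
    -- -(φ⊕-φ)₁ δ = (φ⊕-φ)₀ - T(φ⊕-φ)₀ : C⁰ → C₁
    (∀ x : A × A,
      -((x.1 * star ((g1 : A) - 1)), -(x.2 * star ((gq : A) - 1)))
        = (x.1, -x.2) - (x.1 * star (g1 : A), x.2 * star (-(gq : A)))) ∧
    -- (φ⊕-φ)₁ + T(φ⊕-φ)₁ = 0 : C¹ → C₁
    (∀ x : A × A,
      ((x.1, -x.2) : A × A)
        + (-(x.1 * star (1 : A)), -(x.2 * star (-1 : A))) = 0) ∧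
    -- i₋ ∘ (φ⊕-φ)₀ ∘ i₋* = 0 : D₋⁰ → (D₋)₁  (i₋* y = (y star 1, y star l_a⁻¹))
    (∀ y : A,
      (y * star (1 : A)) + (-(y * star ((la⁻¹ : Aˣ) : A))) * ((la⁻¹ : Aˣ) : A) = 0) ∧
    -- i₋ ∘ (φ⊕-φ)₀ ∘ i₋* = 0 : D₋¹ → (D₋)₀
    (∀ y : A,
      (y * star (1 : A)) * (g1 : A)
        + (-((y * star ((la⁻¹ : Aˣ) : A)) * (gq : A))) * ((la⁻¹ : Aˣ) : A) = 0) ∧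
    -- i₋ ∘ (φ⊕-φ)₁ ∘ i₋* = 0 : D₋¹ → (D₋)₁
    (∀ y : A,
      (y * star (1 : A)) + (-(y * star ((la⁻¹ : Aˣ) : A))) * ((la⁻¹ : Aˣ) : A) = 0) ∧
    -- i₊ ∘ (-(φ⊕-φ))₀ ∘ i₊* = 0 : D₊⁰ → (D₊)₁  (i₊* y = (y star l_b⁻¹, y star 1))
    (∀ y : A,
      (-(y * star ((lb⁻¹ : Aˣ) : A))) * ((lb⁻¹ : Aˣ) : A) + (y * star (1 : A)) = 0) ∧
    -- i₊ ∘ (-(φ⊕-φ))₀ ∘ i₊* = 0 : D₊¹ → (D₊)₀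
    (∀ y : A,
      (-((y * star ((lb⁻¹ : Aˣ) : A)) * (g1 : A))) * ((lb⁻¹ : Aˣ) : A)
        + (y * star (1 : A)) * (gq : A) = 0) ∧
    -- i₊ ∘ (-(φ⊕-φ))₁ ∘ i₊* = 0 : D₊¹ → (D₊)₁
    (∀ y : A,
      (-(y * star ((lb⁻¹ : Aˣ) : A))) * ((lb⁻¹ : Aˣ) : A) + (y * star (1 : A)) = 0) := by
  have hsa : star ((la⁻¹ : Aˣ) : A) = (la : A) := by rw [← hla, star_star]
  have hsb : star ((lb⁻¹ : Aˣ) : A) = (lb : A) := by rw [← hlb, star_star]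
  have hgqla : (gq : A) * ((la⁻¹ : Aˣ) : A) = ((la⁻¹ : Aˣ) : A) * (g1 : A) := by
    rw [ha]; simp [mul_assoc]
  have hg1lb : (g1 : A) * ((lb⁻¹ : Aˣ) : A) = ((lb⁻¹ : Aˣ) : A) * (gq : A) := by
    rw [hb]; simp [mul_assoc]
  have hlagq : (la : A) * (gq : A) * ((la⁻¹ : Aˣ) : A) = (g1 : A) := by
    rw [ha]; simp [mul_assoc, ← mul_assoc]
  have hlbg1 : (lb : A) * (g1 : A) * ((lb⁻¹ : Aˣ) : A) = (gq : A) := by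
    rw [hb]; simp [mul_assoc, ← mul_assoc]
  have hsg1 : star ((g1 : A) - 1) * (g1 : A) = 1 - (g1 : A) := by
    rw [star_sub, star_one, hg1, sub_mul, one_mul]; simp
  have hsgq : star ((gq : A) - 1) * (gq : A) = 1 - (gq : A) := by
    rw [star_sub, star_one, hgq, sub_mul, one_mul]; simp
  have hgla : ((gq : A) - 1) * ((la⁻¹ : Aˣ) : A) = ((la⁻¹ : Aˣ) : A) * ((g1 : A) - 1) := by
    rw [sub_mul, mul_sub, hgqla, one_mul, mul_one]
  have hglb : ((g1 : A) - 1) * ((lb⁻¹ : Aˣ) : A) = ((lb⁻¹ : Aˣ) : A) * ((gq : A) - 1) := by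
    rw [sub_mul, mul_sub, hg1lb, one_mul, mul_one]
  refine ⟨?_, ?_, ?_, ?_, ?_, ?_, ?_, ?_, ?_, ?_, ?_, ?_⟩
  · intro x
    rw [mul_assoc, hgla, ← mul_assoc, add_mul]
  · intro x
    rw [mul_assoc, hglb, ← mul_assoc, add_mul]
  · intro x
    rw [mul_assoc, mul_assoc, hsg1, hsgq, Prod.mk_add_mk, Prod.mk_eq_zero]
    constructor <;> noncomm_ring
  · intro x
    simp only [star_one, star_neg, mul_one, mul_neg, Prod.mk_sub_mk, Prod.mk.injEq]
    constructor <;> noncomm_ring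
  · intro x
    simp only [star_sub, star_neg, star_one, hg1, hgq, Prod.neg_mk, Prod.mk_sub_mk,
      Prod.mk.injEq, neg_neg, mul_sub, mul_neg, mul_one]
    constructor <;> noncomm_ring
  · intro x
    simp only [star_one, star_neg, mul_one, mul_neg, neg_neg, Prod.mk_add_mk,
      Prod.mk_eq_zero]
    constructor <;> abel
  · intro y
    rw [hsa]; simp [mul_assoc]
  · intro y
    have h : (la : A) * ((gq : A) * ((la⁻¹ : Aˣ) : A)) = (g1 : A) := by
      rw [← mul_assoc, hlagq]
    simp only [hsa, star_one, mul_one, neg_mul, mul_assoc, h, add_neg_cancel]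
  · intro y
    rw [hsa]; simp [mul_assoc]
  · intro y
    rw [hsb]; simp [mul_assoc]
  · intro y
    have h : (lb : A) * ((g1 : A) * ((lb⁻¹ : Aˣ) : A)) = (gq : A) := by
      rw [← mul_assoc, hlbg1]
    simp only [hsb, star_one, mul_one, neg_mul, mul_assoc, h, neg_add_cancel]
  · intro y
    rw [hsb]; simp [mul_assoc]
end
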